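/- arXiv:2506.21221 — 10 statements merged into one kernel-verified Lean document; each statement's English description precedes it below -/
import Mathlib

section
/- Let P₁,…,P_k be homogeneous holomorphic polynomials on ℂⁿ all of the same degree, and set Q(z) := ∑_{l=1}^k P_l(z)·conj(P_l(z)). Assume Q is holomorphically nondegenerate. Then: (i) there is no nonzero λ = (λ₁,…,λₙ) ∈ ℝⁿ such that ∑_{j=1}^n λ_j ( z_j·∂Q/∂z_j(z) + z̄_j·∂Q/∂z̄_j(z) ) = 0 for all z ∈ ℂⁿ (no real diagonal rotation); and (ii) there is no nonzero nilpotent n×n complex matrix N such that ∑_{j=1}^n ( (Nz)_j·∂Q/∂z_j(z) + conj((Nz)_j·∂Q/∂z_j(z)) ) = 0 for all z ∈ ℂⁿ (no nilpotent rotation). -/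
/-!
A rotation `X = ∑ j, (N z)_j ∂/∂z_j` acts on the `P_l` through the derivation
`D = linearVectorField N`, and `X Q = ∑ l, D P_l · conj P_l`. After polarization, `Re (X Q) = 0`
says that `∑ l, D P_l ⊗ conj P_l + P_l ⊗ conj (D P_l) = 0`, i.e. `D` is skew for the positive
pairing `⟨u, v⟩ = ∑ l, u_l ⊗ conj v_l`. If `N` is real diagonal, `D` multiplies `z^α` by the real
number `∑ j, λ_j α_j`, and skewness at the coefficient of `z^α ⊗ conj z^α` forces `D P_l = 0`.
If `N` is nilpotent, `D` is locally nilpotent, and skewness gives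
`⟨D^r P, D^r P⟩ = ± ⟨P, D^(2r) P⟩`; so `D^(r+1) P = 0` implies `D^r P = 0` for `r ≥ 1`, and
descending gives `D P = 0`. In both cases `X Q = 0`, and nondegeneracy forces `N = 0`.
-/

open MvPolynomial Matrix ComplexConjugate

noncomputable section

namespace Derivation

variable {R A : Type*} [CommSemiring R] [CommSemiring A] [Algebra R A] (D : Derivation R A A)

theorem pow_apply_mul_eq_zero {a b : ℕ} {p q : A} (hp : ((D : Module.End R A) ^ a) p = 0)
    (hq : ((D : Module.End R A) ^ b) q = 0) : ((D : Module.End R A) ^ (a + b)) (p * q) = 0 := by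
  induction h : a + b generalizing a b p q with
  | zero =>
    obtain ⟨rfl, rfl⟩ : a = 0 ∧ b = 0 := by omega
    simp_all
  | succ c ih =>
    rcases a with _ | a
    · simp_all
    rcases b with _ | b
    · simp_all
    have hDp : ((D : Module.End R A) ^ a) (D p) = 0 := by
      rwa [pow_succ, Module.End.mul_apply] at hp
    have hDq : ((D : Module.End R A) ^ b) (D q) = 0 := by
      rwa [pow_succ, Module.End.mul_apply] at hq
    rw [pow_succ, Module.End.mul_apply, coeFn_coe, leibniz, map_add, smul_eq_mul, smul_eq_mul,
      ih hp hDq (by omega), ih hq hDp (by omega), add_zero]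

end Derivation

namespace MvPolynomial

variable {σ R : Type*} [CommSemiring R]

theorem exists_pow_derivation_apply_eq_zero
    (D : Derivation R (MvPolynomial σ R) (MvPolynomial σ R))
    (hX : ∀ i, ∃ r, ((D : Module.End R (MvPolynomial σ R)) ^ r) (X i) = 0)
    (p : MvPolynomial σ R) : ∃ r, ((D : Module.End R (MvPolynomial σ R)) ^ r) p = 0 := by
  induction p using MvPolynomial.induction_on with
  | C a => exact ⟨1, by simp [← algebraMap_eq]⟩
  | add p q hp hq =>
    obtain ⟨r, hr⟩ := hp
    obtain ⟨s, hs⟩ := hq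
    refine ⟨r + s, ?_⟩
    rw [map_add, Module.End.pow_map_zero_of_le (by omega) hr,
      Module.End.pow_map_zero_of_le (by omega) hs, add_zero]
  | mul_X p i hp =>
    obtain ⟨r, hr⟩ := hp
    obtain ⟨s, hs⟩ := hX i
    exact ⟨r + s, D.pow_apply_mul_eq_zero hr hs⟩

variable [Fintype σ]

def linearVectorField (N : Matrix σ σ R) : Derivation R (MvPolynomial σ R) (MvPolynomial σ R) :=
  ∑ j, (∑ i, N j i • (X i : MvPolynomial σ R)) • pderiv j

theorem linearVectorField_apply (N : Matrix σ σ R) (p : MvPolynomial σ R) :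
    linearVectorField N p = ∑ j, (∑ i, N j i • X i) * pderiv j p := by
  change Derivation.coeFnAddMonoidHom (∑ j, _) p = _
  simp [map_sum, Finset.sum_apply]

theorem linearVectorField_X (N : Matrix σ σ R) (i : σ) :
    linearVectorField N (X i) = ∑ j, N i j • X j := by
  classical
  simp [linearVectorField_apply, pderiv_X, Pi.single_apply]

theorem pow_linearVectorField_X [DecidableEq σ] (N : Matrix σ σ R) (r : ℕ) (i : σ) :
    ((linearVectorField N : Module.End R (MvPolynomial σ R)) ^ r) (X i)
      = ∑ j, (N ^ r) i j • X j := by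
  induction r generalizing i with
  | zero => simp [one_apply]
  | succ r ih =>
    rw [pow_succ, Module.End.mul_apply, Derivation.coeFn_coe, linearVectorField_X]
    simp only [map_sum, map_smul, ih, Finset.smul_sum, smul_smul, pow_succ', mul_apply,
      Finset.sum_smul]
    exact Finset.sum_comm

theorem exists_pow_linearVectorField_apply_eq_zero [DecidableEq σ] {N : Matrix σ σ R}
    (hN : IsNilpotent N) (p : MvPolynomial σ R) :
    ∃ r, ((linearVectorField N : Module.End R (MvPolynomial σ R)) ^ r) p = 0 := by
  obtain ⟨s, hs⟩ := hN
  exact exists_pow_derivation_apply_eq_zero _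
    (fun i => ⟨s, by simp [pow_linearVectorField_X, hs]⟩) p

theorem eval_linearVectorField (N : Matrix σ σ R) (z : σ → R) (p : MvPolynomial σ R) :
    eval z (linearVectorField N p) = ∑ j, (N *ᵥ z) j * eval z (pderiv j p) := by
  simp [linearVectorField_apply, mulVec, dotProduct]

theorem coeff_linearVectorField_diagonal [DecidableEq σ] (d : σ → R) (α : σ →₀ ℕ)
    (p : MvPolynomial σ R) :
    coeff α (linearVectorField (diagonal d) p) = (∑ j, d j * α j) * coeff α p := by
  induction p using MvPolynomial.induction_on' with
  | monomial β c =>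
    simp only [linearVectorField_apply, diagonal_apply, ite_smul, zero_smul, Finset.sum_ite_eq,
      Finset.mem_univ, if_true, smul_mul_assoc, X_mul_pderiv_monomial, coeff_sum, coeff_smul,
      coeff_monomial]
    split_ifs with h
    · subst h
      simp [Finset.sum_mul, nsmul_eq_mul, mul_assoc]
    · simp
  | add p q hp hq => simp only [map_add, coeff_add, hp, hq, mul_add]

end MvPolynomial

open ComplexOrder in
theorem Complex.sum_mul_conj_eq_zero_iff {ι : Type*} {s : Finset ι} {z : ι → ℂ} :
    ∑ i ∈ s, z i * conj (z i) = 0 ↔ ∀ i ∈ s, z i = 0 := by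
  simp only [← Complex.star_def]
  rw [Finset.sum_eq_zero_iff_of_nonneg fun i _ => mul_star_self_nonneg (z i)]
  simp

namespace MvPolynomial

variable {σ ι : Type*}

theorem eq_zero_of_eval_ofReal_eq_zero (G : MvPolynomial σ ℂ)
    (h : ∀ x : σ → ℝ, eval (fun s => (x s : ℂ)) G = 0) : G = 0 := by
  refine funext_set (fun _ => Set.range ((↑) : ℝ → ℂ))
    (fun _ => Set.infinite_range_of_injective Complex.ofReal_injective) fun x hx => ?_
  choose y hy using fun s => hx s trivial
  rw [← _root_.funext hy]
  exact h y

/-- The substitution `(a, b) ↦ (a + i b, a - i b)` maps `ℝ^σ × ℝ^σ` onto the totally real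
subspace `{(z, conj z)}` of `ℂ^σ × ℂ^σ`. -/
theorem eq_zero_of_eval_sumElim_conj_eq_zero (G : MvPolynomial (σ ⊕ σ) ℂ)
    (h : ∀ z : σ → ℂ, eval (Sum.elim z (conj ∘ z)) G = 0) : G = 0 := by
  set L : σ ⊕ σ → MvPolynomial (σ ⊕ σ) ℂ :=
    Sum.elim (fun j => X (.inl j) + C Complex.I * X (.inr j))
      (fun j => X (.inl j) - C Complex.I * X (.inr j))
  have eval_subst : ∀ a b : σ → ℂ, eval (Sum.elim a b) (eval₂ C L G)
      = eval (Sum.elim (a + Complex.I • b) (a - Complex.I • b)) G := by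
    intro a b
    rw [← eval_assoc]
    congr 1
    ext (j | j) <;> simp [L]
  have hL : eval₂ C L G = 0 := by
    refine eq_zero_of_eval_ofReal_eq_zero _ fun x => ?_
    set a : σ → ℂ := fun s => (x (.inl s) : ℂ)
    set b : σ → ℂ := fun s => (x (.inr s) : ℂ)
    have hconj : a - Complex.I • b = conj ∘ (a + Complex.I • b) := by
      ext j; simp [a, b, sub_eq_add_neg]
    rw [show (fun s => (x s : ℂ)) = Sum.elim a b from (Sum.elim_comp_inl_inr _).symm,
      eval_subst, hconj]
    exact h _
  refine MvPolynomial.funext fun x => ?_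
  set z := x ∘ .inl
  set y := x ∘ .inr
  set a : σ → ℂ := (2 : ℂ)⁻¹ • (z + y)
  set b : σ → ℂ := (2 * Complex.I)⁻¹ • (z - y)
  have ha : a + Complex.I • b = z := by
    ext j; simp only [a, b, Pi.add_apply, Pi.smul_apply, Pi.sub_apply, smul_eq_mul]
    field_simp; ring
  have hb : a - Complex.I • b = y := by
    ext j; simp only [a, b, Pi.sub_apply, Pi.add_apply, Pi.smul_apply, smul_eq_mul]
    field_simp; ring
  calc eval x G = eval (Sum.elim z y) G := by rw [Sum.elim_comp_inl_inr]
    _ = eval (Sum.elim a b) (eval₂ C L G) := by rw [eval_subst, ha, hb]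
    _ = eval x 0 := by rw [hL, map_zero, map_zero]

end MvPolynomial

/-- The tensor `∑ i, u i ⊗ conj (v i)` vanishes. -/
def PairingVanishes {σ ι : Type*} [Fintype ι] (u v : ι → MvPolynomial σ ℂ) : Prop :=
  ∀ z w : σ → ℂ, ∑ i, eval z (u i) * conj (eval w (v i)) = 0

namespace PairingVanishes

variable {σ ι κ : Type*} [Fintype ι] [Fintype κ] {u v : ι → MvPolynomial σ ℂ}

theorem of_diagonal (h : ∀ z, ∑ i, eval z (u i) * conj (eval z (v i)) = 0) :
    PairingVanishes u v := by
  set G : MvPolynomial (σ ⊕ σ) ℂ :=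
    ∑ i, rename Sum.inl (u i) * rename Sum.inr (map (starRingEnd ℂ) (v i))
  have eval_G : ∀ z y,
      eval (Sum.elim z y) G = ∑ i, eval z (u i) * conj (eval (conj ∘ y) (v i)) := by
    intro z y
    simp only [G, map_sum, map_mul, eval_rename, map_eval, Function.comp_def,
      Complex.conj_conj, Sum.elim_inl, Sum.elim_inr]
  have hG : G = 0 := eq_zero_of_eval_sumElim_conj_eq_zero G fun z => by
    rw [eval_G]
    simpa [Function.comp_def] using h z
  intro z w
  simpa [Function.comp_def, hG] using (eval_G z (conj ∘ w)).symm

theorem symm (h : PairingVanishes u v) : PairingVanishes v u := fun z w => by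
  simpa [mul_comm] using congrArg conj (h w z)

theorem iff_sum_smul_eq_zero :
    PairingVanishes u v ↔ ∀ w, ∑ i, conj (eval w (v i)) • u i = 0 := by
  simp only [PairingVanishes, MvPolynomial.funext_iff, map_sum, smul_eval, map_zero]
  simp only [mul_comm (conj _)]
  exact forall_comm

theorem map_left (h : PairingVanishes u v) (T : MvPolynomial σ ℂ →ₗ[ℂ] MvPolynomial σ ℂ) :
    PairingVanishes (T ∘ u) v := by
  rw [iff_sum_smul_eq_zero] at h ⊢
  intro w
  simp only [Function.comp_apply, ← map_smul, ← map_sum, h w, map_zero]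

theorem map_right (h : PairingVanishes u v) (T : MvPolynomial σ ℂ →ₗ[ℂ] MvPolynomial σ ℂ) :
    PairingVanishes u (T ∘ v) :=
  (h.symm.map_left T).symm

theorem of_sumElim {u' v' : κ → MvPolynomial σ ℂ}
    (h : PairingVanishes (Sum.elim u u') (Sum.elim v v')) (h' : PairingVanishes u' v') :
    PairingVanishes u v := fun z w => by
  simpa [Fintype.sum_sum_type, h' z w] using h z w

theorem sum_coeff_mul_conj_coeff (h : PairingVanishes u v) (α β : σ →₀ ℕ) :
    ∑ i, coeff α (u i) * conj (coeff β (v i)) = 0 := by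
  have hα : ∑ i, conj (coeff α (u i)) • v i = 0 := by
    refine MvPolynomial.funext fun w => ?_
    have := congrArg (fun p => conj (coeff α p)) (iff_sum_smul_eq_zero.mp h w)
    simpa [coeff_sum, mul_comm] using this
  simpa [coeff_sum] using congrArg (fun p => conj (coeff β p)) hα

theorem eq_zero_of_self (h : PairingVanishes u u) (i : ι) : u i = 0 :=
  MvPolynomial.funext fun z => by
    simpa using Complex.sum_mul_conj_eq_zero_iff.mp (h z z) i (Finset.mem_univ i)

variable {D : Module.End ℂ (MvPolynomial σ ℂ)} {P : ι → MvPolynomial σ ℂ}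

theorem pow_pow_of_skew (hskew : PairingVanishes (Sum.elim (D ∘ P) P) (Sum.elim P (D ∘ P)))
    {a b : ℕ} (h : ∀ l, (D ^ (a + b)) (P l) = 0) :
    PairingVanishes (fun l => (D ^ a) (P l)) (fun l => (D ^ b) (P l)) := by
  induction a generalizing b with
  | zero => intro z w; simp_all
  | succ a ih =>
    have hab : PairingVanishes
        (Sum.elim (fun l => (D ^ (a + 1)) (P l)) (fun l => (D ^ a) (P l)))
        (Sum.elim (fun l => (D ^ b) (P l)) (fun l => (D ^ (b + 1)) (P l))) := by
      convert (hskew.map_left (D ^ a)).map_right (D ^ b) using 1 <;>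
        ext (l | l) <;> simp [pow_succ]
    exact hab.of_sumElim (ih fun l => by rw [← h l]; ring_nf)

theorem apply_eq_zero_of_skew_of_locallyNilpotent
    (hskew : PairingVanishes (Sum.elim (D ∘ P) P) (Sum.elim P (D ∘ P)))
    (hnil : ∀ l, ∃ r, (D ^ r) (P l) = 0) (l : ι) : D (P l) = 0 := by
  choose r hr using hnil
  have hR : ∀ l, (D ^ (∑ l, r l + 1)) (P l) = 0 := fun l =>
    Module.End.pow_map_zero_of_le
      (Nat.le_succ_of_le (Finset.single_le_sum (fun _ _ => Nat.zero_le _) (Finset.mem_univ l)))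
      (hr l)
  suffices descend : ∀ s ≥ 1, (∀ l, (D ^ s) (P l) = 0) → ∀ l, D (P l) = 0 from
    descend _ (Nat.le_add_left 1 _) hR l
  intro s hs
  induction s, hs using Nat.le_induction with
  | base => simp
  | succ s hs ih =>
    intro h
    refine ih fun l => (hskew.pow_pow_of_skew fun l => ?_).eq_zero_of_self l
    exact Module.End.pow_map_zero_of_le (by omega) (h l)

theorem apply_eq_zero_of_skew_of_real_diagonal
    (hskew : PairingVanishes (Sum.elim (D ∘ P) P) (Sum.elim P (D ∘ P)))
    (c : (σ →₀ ℕ) → ℝ) (hD : ∀ p α, coeff α (D p) = c α * coeff α p) (l : ι) : D (P l) = 0 := by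
  ext α
  have h := hskew.sum_coeff_mul_conj_coeff α α
  simp only [Fintype.sum_sum_type, Sum.elim_inl, Sum.elim_inr, Function.comp_apply, hD, map_mul,
    Complex.conj_ofReal] at h
  have hc : (2 * c α : ℂ) * ∑ l, coeff α (P l) * conj (coeff α (P l)) = 0 := by
    rw [← h, Finset.mul_sum, ← Finset.sum_add_distrib]
    exact Finset.sum_congr rfl fun _ _ => by ring
  rw [hD, coeff_zero]
  rcases mul_eq_zero.mp hc with hc | hP
  · rw [(mul_eq_zero.mp hc).resolve_left two_ne_zero, zero_mul]
  · rw [Complex.sum_mul_conj_eq_zero_iff.mp hP l (Finset.mem_univ l), mul_zero]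

end PairingVanishes

section SumOfSquares

variable {σ ι : Type*} [Fintype σ] [Fintype ι]

/-- `∂Q/∂z_j (z)` for `Q = ∑ l, P l * conj (P l)`. -/
def sumSqPDeriv (P : ι → MvPolynomial σ ℂ) (j : σ) (z : σ → ℂ) : ℂ :=
  ∑ l, eval z (pderiv j (P l)) * conj (eval z (P l))

theorem sum_eval_linearVectorField_mul_conj (N : Matrix σ σ ℂ) (P : ι → MvPolynomial σ ℂ)
    (z : σ → ℂ) :
    ∑ l, eval z (linearVectorField N (P l)) * conj (eval z (P l))
      = ∑ j, (N *ᵥ z) j * sumSqPDeriv P j z := by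
  simp only [eval_linearVectorField, sumSqPDeriv, Finset.sum_mul, Finset.mul_sum, mul_assoc]
  exact Finset.sum_comm

theorem PairingVanishes.of_tangent (N : Matrix σ σ ℂ) (P : ι → MvPolynomial σ ℂ)
    (h : ∀ z, ∑ j, ((N *ᵥ z) j * sumSqPDeriv P j z + conj ((N *ᵥ z) j * sumSqPDeriv P j z))
      = 0) :
    PairingVanishes (Sum.elim (linearVectorField N ∘ P) P)
      (Sum.elim P (linearVectorField N ∘ P)) := by
  refine .of_diagonal fun z => ?_
  rw [Fintype.sum_sum_type, ← h z, Finset.sum_add_distrib, ← map_sum,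
    ← sum_eval_linearVectorField_mul_conj]
  simp [map_sum, mul_comm]

theorem eq_zero_of_linearVectorField_eq_zero {N : Matrix σ σ ℂ} {P : ι → MvPolynomial σ ℂ}
    (hnd : ∀ f : σ → MvPolynomial σ ℂ,
      (∀ z, ∑ j, eval z (f j) * sumSqPDeriv P j z = 0) → f = 0)
    (h : ∀ l, linearVectorField N (P l) = 0) : N = 0 := by
  classical
  have hrows := hnd (fun j => ∑ i, N j i • X i) fun z => by
    simpa [h, mulVec, dotProduct] using (sum_eval_linearVectorField_mul_conj N P z).symm
  ext j i
  simpa [coeff_sum, coeff_X, Finsupp.single_eq_single_iff] using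
    congrArg (coeff (Finsupp.single i 1)) (congrFun hrows j)

end SumOfSquares

theorem sum_of_squares_no_real_diagonal_no_nilpotent_rotation_general {n k : ℕ}
    (P : Fin k → MvPolynomial (Fin n) ℂ)
    -- `Q` is holomorphically nondegenerate, where `∂Q/∂z_j (z) = ∑_l ∂P_l/∂z_j (z) · conj (P_l z)`
    (hnd : ∀ f : Fin n → MvPolynomial (Fin n) ℂ,
      (∀ z : Fin n → ℂ, ∑ j, eval z (f j) *
        (∑ l, eval z (pderiv j (P l)) * (starRingEnd ℂ) (eval z (P l))) = 0) → f = 0) :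
    -- (i) no nonzero real diagonal rotation
    (¬ ∃ lam : Fin n → ℝ, lam ≠ 0 ∧ ∀ z : Fin n → ℂ,
      ∑ j, (lam j : ℂ) *
        (z j * (∑ l, eval z (pderiv j (P l)) * (starRingEnd ℂ) (eval z (P l)))
          + (starRingEnd ℂ) (z j) *
            (∑ l, eval z (P l) * (starRingEnd ℂ) (eval z (pderiv j (P l))))) = 0) ∧
    -- (ii) no nonzero nilpotent rotation
    (¬ ∃ N : Matrix (Fin n) (Fin n) ℂ, IsNilpotent N ∧ N ≠ 0 ∧ ∀ z : Fin n → ℂ,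
      ∑ j, (N.mulVec z j * (∑ l, eval z (pderiv j (P l)) * (starRingEnd ℂ) (eval z (P l)))
        + (starRingEnd ℂ)
            (N.mulVec z j *
              (∑ l, eval z (pderiv j (P l)) * (starRingEnd ℂ) (eval z (P l))))) = 0) := by
  refine ⟨?_, ?_⟩
  · rintro ⟨lam, hlam, hrot⟩
    set N : Matrix (Fin n) (Fin n) ℂ := diagonal fun j => (lam j : ℂ)
    have hskew := PairingVanishes.of_tangent N P fun z => by
      rw [← hrot z]
      refine Finset.sum_congr rfl fun j _ => ?_
      simp [N, sumSqPDeriv, mulVec_diagonal, map_sum, mul_comm (conj _), mul_assoc, mul_add]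
    have hN : N = 0 := eq_zero_of_linearVectorField_eq_zero hnd
      (hskew.apply_eq_zero_of_skew_of_real_diagonal (fun α => ∑ j, lam j * α j) fun p α => by
        simp [N, coeff_linearVectorField_diagonal])
    exact hlam (funext fun j => by simpa [N] using congrFun (congrFun hN j) j)
  · rintro ⟨N, hN, hN0, hrot⟩
    exact hN0 (eq_zero_of_linearVectorField_eq_zero hnd
      ((PairingVanishes.of_tangent N P hrot).apply_eq_zero_of_skew_of_locallyNilpotent
        fun l => exists_pow_linearVectorField_apply_eq_zero hN (P l)))

/-- for a holomorphically nondegenerate sum of squares model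
`Q = ∑_l P_l · conj P_l` (with `P_l` homogeneous holomorphic polynomials of the same degree),
there is no nonzero real diagonal rotation and no nonzero nilpotent rotation in `𝔤₀`. -/
theorem sum_of_squares_no_real_diagonal_no_nilpotent_rotation {n k m : ℕ}
    (P : Fin k → MvPolynomial (Fin n) ℂ)
    (hP : ∀ l, (P l).IsHomogeneous m)
    -- `Q` is holomorphically nondegenerate, where `∂Q/∂z_j (z) = ∑_l ∂P_l/∂z_j (z) · conj (P_l z)`
    (hnd : ∀ f : Fin n → MvPolynomial (Fin n) ℂ,
      (∀ z : Fin n → ℂ, ∑ j, eval z (f j) *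
        (∑ l, eval z (pderiv j (P l)) * (starRingEnd ℂ) (eval z (P l))) = 0) → f = 0) :
    -- (i) no nonzero real diagonal rotation
    (¬ ∃ lam : Fin n → ℝ, lam ≠ 0 ∧ ∀ z : Fin n → ℂ,
      ∑ j, (lam j : ℂ) *
        (z j * (∑ l, eval z (pderiv j (P l)) * (starRingEnd ℂ) (eval z (P l)))
          + (starRingEnd ℂ) (z j) *
            (∑ l, eval z (P l) * (starRingEnd ℂ) (eval z (pderiv j (P l))))) = 0) ∧
    -- (ii) no nonzero nilpotent rotation
    (¬ ∃ N : Matrix (Fin n) (Fin n) ℂ, IsNilpotent N ∧ N ≠ 0 ∧ ∀ z : Fin n → ℂ,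
      ∑ j, (N.mulVec z j * (∑ l, eval z (pderiv j (P l)) * (starRingEnd ℂ) (eval z (P l)))
        + (starRingEnd ℂ)
            (N.mulVec z j *
              (∑ l, eval z (pderiv j (P l)) * (starRingEnd ℂ) (eval z (P l))))) = 0) :=
  sum_of_squares_no_real_diagonal_no_nilpotent_rotation_general P hnd
end
end

section
/- Let P₁,…,P_k be holomorphic polynomials on ℂⁿ and let N be a nilpotent n×n complex matrix; let X denote the derivation on polynomials given by X(P)(z) = ∑_{j=1}^n (Nz)_j·∂P/∂z_j(z). If Re( ∑_{l=1}^k X(P_l)(z)·conj(P_l(z)) ) = 0 for all z ∈ ℂⁿ, then X(P_l) = 0 identically for every l = 1,…,k. -/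
/-!
Fix `z` and restrict everything to the curve `γ(t) = exp(tN) z`, which is polynomial in `t`
because `N` is nilpotent and along which `X` acts as `d/dt`. The polynomials
`q_l(t) = P_l(γ(t))` then satisfy `d/dt ∑ |q_l(t)|² = 2 Re ∑ q_l'(t) conj(q_l(t)) = 0` for real
`t`, so `∑ |q_l|²` is constant on `ℝ`. Comparing top coefficients, a sum of squared moduli of
polynomials can only be constant if every summand is, so each `q_l` is constant and
`X(P_l)(z) = q_l'(0) = 0`.
-/

open MvPolynomial

noncomputable section

/-- The derivation `X(P)(z) = ∑_j (Nz)_j · ∂P/∂z_j` on holomorphic polynomials on `ℂⁿ`,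
associated to the linear vector field given by the matrix `N`. -/
def matDeriv {n : ℕ} (N : Matrix (Fin n) (Fin n) ℂ) (P : MvPolynomial (Fin n) ℂ) :
    MvPolynomial (Fin n) ℂ :=
  ∑ j, (∑ k, C (N j k) * X k) * pderiv j P

end

open Polynomial in
theorem MvPolynomial.derivative_aeval {σ R : Type*} [CommSemiring R] [Fintype σ]
    (f : σ → R[X]) (p : MvPolynomial σ R) :
    derivative (aeval f p) = ∑ i, aeval f (pderiv i p) * derivative (f i) := by
  classical
  induction p using MvPolynomial.induction_on with
  | C a => simp
  | add p q hp hq => simp [hp, hq, add_mul, Finset.sum_add_distrib]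
  | mul_X p j hp =>
    simp only [map_mul, aeval_X, derivative_mul, hp, Finset.sum_mul, pderiv_mul, pderiv_X,
      map_add, add_mul, Finset.sum_add_distrib]
    congr 1
    · exact Finset.sum_congr rfl fun i _ => mul_right_comm _ _ _
    · simp [Pi.single_apply]

theorem MvPolynomial.polynomial_eval_aeval {σ R : Type*} [CommSemiring R]
    (f : σ → Polynomial R) (p : MvPolynomial σ R) (x : R) :
    (aeval f p).eval x = eval (fun i => (f i).eval x) p := by
  rw [← Polynomial.coe_evalRingHom, MvPolynomial.map_aeval]
  congr
  ext
  simp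

namespace Polynomial

theorem eval_ofReal_map_conj (p : ℂ[X]) (t : ℝ) :
    (p.map (starRingEnd ℂ)).eval (t : ℂ) = starRingEnd ℂ (p.eval (t : ℂ)) := by
  rw [eval_map, ← eval₂_hom, Complex.conj_ofReal]

theorem natDegree_eq_zero_of_sum_mul_map_conj_eq_C {ι : Type*} [Fintype ι] {q : ι → ℂ[X]}
    {c : ℂ} (h : ∑ l, q l * (q l).map (starRingEnd ℂ) = C c) (l : ι) :
    (q l).natDegree = 0 := by
  set d := Finset.univ.sup fun l => (q l).natDegree
  have hd (l : ι) : (q l).natDegree ≤ d := Finset.le_sup (f := fun l => (q l).natDegree)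
    (Finset.mem_univ l)
  suffices d = 0 from Nat.le_zero.mp (this ▸ hd l)
  by_contra hd0
  have hnorm : ∑ l, (‖(q l).coeff d‖ : ℂ) ^ 2 = 0 := by
    have htop := congrArg (coeff · (d + d)) h
    simp only [finsetSum_coeff, coeff_C, show d + d ≠ 0 by omega, if_false] at htop
    rw [← htop]
    refine Finset.sum_congr rfl fun l _ => ?_
    rw [coeff_mul_add_eq_of_natDegree_le (hd l) (natDegree_map_le.trans (hd l)), coeff_map,
      Complex.mul_conj']
  norm_cast at hnorm
  have hcoeff (l : ι) : (q l).coeff d = 0 := by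
    simpa using (Finset.sum_eq_zero_iff_of_nonneg (fun _ _ => by positivity)).mp hnorm l
      (Finset.mem_univ l)
  obtain ⟨l₀, -, hl₀⟩ := Finset.exists_mem_eq_sup Finset.univ ⟨l, Finset.mem_univ l⟩
    fun l => (q l).natDegree
  have hq₀ : q l₀ = 0 := by
    rw [← leadingCoeff_eq_zero, leadingCoeff, ← hl₀]
    exact hcoeff l₀
  exact hd0 (hl₀.trans (by simp [hq₀]))

theorem derivative_eq_zero_of_re_sum_derivative_mul_conj_eq_zero {ι : Type*} [Fintype ι]
    (q : ι → ℂ[X])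
    (h : ∀ t : ℝ,
      (∑ l, (derivative (q l)).eval (t : ℂ) * starRingEnd ℂ ((q l).eval (t : ℂ))).re = 0)
    (l : ι) : derivative (q l) = 0 := by
  set R := ∑ l, q l * (q l).map (starRingEnd ℂ)
  have hR (t : ℝ) : (derivative R).eval (t : ℂ) = 0 := by
    simp only [R, derivative_sum, derivative_mul, derivative_map, eval_finsetSum, eval_add,
      eval_mul, eval_ofReal_map_conj]
    have hre (a b : ℂ) :
        b * starRingEnd ℂ a + a * starRingEnd ℂ b = ((2 * (b * starRingEnd ℂ a).re : ℝ) : ℂ) := by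
      rw [← Complex.add_conj]
      simp [mul_comm]
    simp only [hre, ← Complex.ofReal_sum, ← Finset.mul_sum, ← Complex.re_sum, h t]
    simp
  have hR₀ : derivative R = 0 :=
    eq_zero_of_infinite_isRoot _ <|
      (Set.infinite_range_of_injective Complex.ofReal_injective).mono <| by
        rintro _ ⟨t, rfl⟩
        exact hR t
  exact derivative_of_natDegree_zero
    (natDegree_eq_zero_of_sum_mul_map_conj_eq_C (eq_C_of_derivative_eq_zero hR₀) l)

end Polynomial

namespace Matrix

open Polynomial Nat

variable {ι K : Type*} [Fintype ι] [DecidableEq ι] [Field K]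

/-- The coordinates of `∑_{i ≤ s} tⁱ Nⁱ z / i!`, which is `exp(tN) z` once `N ^ (s + 1) = 0`. -/
noncomputable def truncExpMulVec (N : Matrix ι ι K) (s : ℕ) (z : ι → K) (j : ι) : K[X] :=
  ∑ i ∈ Finset.range (s + 1), Polynomial.C ((i ! : K)⁻¹ * (N ^ i *ᵥ z) j) * Polynomial.X ^ i

theorem eval_zero_truncExpMulVec (N : Matrix ι ι K) (s : ℕ) (z : ι → K) (j : ι) :
    (N.truncExpMulVec s z j).eval 0 = z j := by
  simp [truncExpMulVec, eval_finsetSum, Finset.sum_range_succ']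

theorem derivative_truncExpMulVec [CharZero K] {N : Matrix ι ι K} {s : ℕ}
    (hs : N ^ (s + 1) = 0) (z : ι → K) (j : ι) :
    derivative (N.truncExpMulVec s z j) = ∑ m, Polynomial.C (N j m) * N.truncExpMulVec s z m := by
  have hN (i : ℕ) :
      ∑ m, N j m * (i ! : K)⁻¹ * (N ^ i *ᵥ z) m = (i ! : K)⁻¹ * (N ^ (i + 1) *ᵥ z) j := by
    rw [_root_.pow_succ', ← mulVec_mulVec, mulVec, dotProduct, Finset.mul_sum]
    exact Finset.sum_congr rfl fun m _ => by ring
  simp only [truncExpMulVec, Finset.mul_sum, ← mul_assoc, ← Polynomial.C_mul]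
  rw [Finset.sum_comm]
  simp only [← Finset.sum_mul, ← map_sum, hN, derivative_sum, derivative_C_mul_X_pow]
  rw [Finset.sum_range_succ', Finset.sum_range_succ, hs]
  simp only [zero_mulVec, Pi.zero_apply, mul_zero, map_zero, zero_mul, add_zero, cast_zero]
  refine Finset.sum_congr rfl fun i _ => ?_
  rw [factorial_succ, add_tsub_cancel_right]
  congr 2
  push_cast
  field_simp

end Matrix

open Polynomial in
theorem derivative_aeval_truncExpMulVec {n : ℕ} {N : Matrix (Fin n) (Fin n) ℂ} {s : ℕ}
    (hs : N ^ (s + 1) = 0) (z : Fin n → ℂ) (P : MvPolynomial (Fin n) ℂ) :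
    derivative (aeval (N.truncExpMulVec s z) P) = aeval (N.truncExpMulVec s z) (matDeriv N P) := by
  simp [MvPolynomial.derivative_aeval, Matrix.derivative_truncExpMulVec hs, matDeriv, mul_comm]

/-- if `N` is nilpotent and `Re (∑_l X(P_l)(z) · conj (P_l(z))) = 0` for all
`z ∈ ℂⁿ`, then `X(P_l) = 0` identically for every `l`. -/
theorem nilpotent_derivation_sum_of_squares {n k : ℕ}
    (P : Fin k → MvPolynomial (Fin n) ℂ)
    (N : Matrix (Fin n) (Fin n) ℂ) (hN : IsNilpotent N)
    (h : ∀ z : Fin n → ℂ,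
      (∑ l, eval z (matDeriv N (P l)) * (starRingEnd ℂ) (eval z (P l))).re = 0) :
    ∀ l, matDeriv N (P l) = 0 := by
  obtain ⟨s, hs⟩ := hN
  have hs' : N ^ (s + 1) = 0 := by rw [pow_succ, hs, zero_mul]
  intro l
  refine MvPolynomial.funext fun z => ?_
  have hq := Polynomial.derivative_eq_zero_of_re_sum_derivative_mul_conj_eq_zero
    (fun l => aeval (N.truncExpMulVec s z) (P l))
    (fun t => by simpa [derivative_aeval_truncExpMulVec hs', polynomial_eval_aeval] using h _) l
  rw [derivative_aeval_truncExpMulVec hs'] at hq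
  simpa [polynomial_eval_aeval, Matrix.eval_zero_truncExpMulVec] using
    congrArg (Polynomial.eval 0) hq
end

section
/- Let P₁,…,P_k be homogeneous holomorphic polynomials on ℂⁿ all of the same degree, set Q(z) := ∑_{l=1}^k P_l(z)·conj(P_l(z)), and let λ = (λ₁,…,λₙ) ∈ ℝⁿ. If ∑_{j=1}^n λ_j ( z_j·∂Q/∂z_j(z) + z̄_j·∂Q/∂z̄_j(z) ) = 0 for all z ∈ ℂⁿ, then ∑_{j=1}^n λ_j·z_j·∂P_l/∂z_j(z) = 0 for all z ∈ ℂⁿ and every l = 1,…,k; consequently ∑_{j=1}^n λ_j·z_j·∂Q/∂z_j(z) = 0 identically. -/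
/-!
Let `E = ∑ λⱼ zⱼ ∂/∂zⱼ`. The hypothesis says that
`∑ₗ (E Pₗ)(z) · conj Pₗ(z) + Pₗ(z) · conj (E Pₗ)(z)` vanishes identically. A polynomial in `z`
and `z̄` vanishing identically has all its coefficients zero, so reading off the coefficient of
`z^d z̄^d`, and using that `E` multiplies the coefficient `c_{l,d}` of `z^d` in `Pₗ` by the real
number `⟨λ, d⟩`, gives `2 ⟨λ, d⟩ ∑ₗ |c_{l,d}|² = 0`. Hence `⟨λ, d⟩ c_{l,d} = 0` for all `l, d`,
that is `E Pₗ = 0`; the second claim follows by summing.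
-/

open MvPolynomial ComplexConjugate

theorem eq_zero_of_eval_ofReal_eq_zero {σ : Type*} {p : MvPolynomial σ ℂ}
    (h : ∀ x : σ → ℝ, eval (fun i ↦ (x i : ℂ)) p = 0) : p = 0 := by
  refine funext_set (fun _ ↦ Set.range ((↑) : ℝ → ℂ))
    (fun _ ↦ Set.infinite_range_of_injective Complex.ofReal_injective) fun x hx ↦ ?_
  choose y hy using fun i ↦ hx i trivial
  rw [map_zero, ← h y]
  congr
  exact (funext hy).symm

theorem eq_zero_of_eval_sumElim_conj_eq_zero {σ : Type*} {F : MvPolynomial (σ ⊕ σ) ℂ}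
    (h : ∀ z : σ → ℂ, eval (Sum.elim z (conj ∘ z)) F = 0) : F = 0 := by
  -- The substitution `(x, y) ↦ (x + i y, x - i y)` sends real points to points `(z, z̄)`, and it
  -- is onto `ℂ × ℂ` since `(a, b)` is the image of `((a + b) / 2, (a - b) / 2i)`.
  set u : σ ⊕ σ → MvPolynomial (σ ⊕ σ) ℂ :=
    Sum.elim (fun j ↦ X (.inl j) + C Complex.I * X (.inr j))
      (fun j ↦ X (.inl j) - C Complex.I * X (.inr j))
  have eval_bind : ∀ x : σ ⊕ σ → ℂ, eval x (bind₁ u F) =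
      eval (Sum.elim (fun j ↦ x (.inl j) + Complex.I * x (.inr j))
        (fun j ↦ x (.inl j) - Complex.I * x (.inr j))) F := by
    intro x
    rw [eval, eval₂Hom_bind₁]
    congr 1
    ext (j | j) <;> simp [u]
  have hu : bind₁ u F = 0 := eq_zero_of_eval_ofReal_eq_zero fun x ↦ by
    rw [eval_bind, ← h fun j ↦ x (.inl j) + Complex.I * x (.inr j)]
    congr 2
    ext (j | j) <;> simp [sub_eq_add_neg]
  refine MvPolynomial.funext fun w ↦ ?_
  have := congrArg (eval (Sum.elim (fun j ↦ (w (.inl j) + w (.inr j)) / 2)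
    (fun j ↦ (w (.inl j) - w (.inr j)) / (2 * Complex.I)))) hu
  rw [eval_bind, map_zero] at this
  rw [map_zero, ← this]
  congr 2
  ext (j | j) <;> simp <;> field_simp <;> ring

theorem coeff_coeff_sumAlgEquiv_rename_inl_mul_rename_inr {R σ τ : Type*} [CommSemiring R]
    (p : MvPolynomial σ R) (q : MvPolynomial τ R) (d : σ →₀ ℕ) (e : τ →₀ ℕ) :
    coeff e (coeff d (sumAlgEquiv R σ τ (rename Sum.inl p * rename Sum.inr q))) =
      coeff d p * coeff e q := by
  have hp : sumAlgEquiv R σ τ (rename Sum.inl p) = map C p :=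
    DFunLike.congr_fun (sumAlgEquiv_comp_rename_inl R σ τ) p
  have hq : sumAlgEquiv R σ τ (rename Sum.inr q) = C q :=
    DFunLike.congr_fun (sumAlgEquiv_comp_rename_inr R σ τ) q
  rw [map_mul, hp, hq, mul_comm, coeff_C_mul, coeff_map, mul_comm, coeff_C_mul]

theorem coeff_X_mul_pderiv {R σ : Type*} [CommSemiring R] (i : σ) (d : σ →₀ ℕ)
    (p : MvPolynomial σ R) : coeff d (X i * pderiv i p) = d i * coeff d p := by
  classical
  induction p using MvPolynomial.induction_on' with
  | monomial s a =>
    rw [X_mul_pderiv_monomial, coeff_smul, coeff_monomial]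
    split_ifs with hs
    · rw [hs, nsmul_eq_mul]
    · simp
  | add p q hp hq => simp only [mul_add, map_add, coeff_add, hp, hq]

theorem sum_coeff_mul_conj_coeff_eq_zero {σ ι : Type*} [Fintype ι]
    (A B : ι → MvPolynomial σ ℂ)
    (h : ∀ z : σ → ℂ, ∑ i, eval z (A i) * conj (eval z (B i)) = 0) (d e : σ →₀ ℕ) :
    ∑ i, coeff d (A i) * conj (coeff e (B i)) = 0 := by
  set F : MvPolynomial (σ ⊕ σ) ℂ :=
    ∑ i, rename Sum.inl (A i) * rename Sum.inr (map conj (B i))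
  have hF : F = 0 := eq_zero_of_eval_sumElim_conj_eq_zero fun z ↦ by
    simp only [F, map_sum, map_mul, eval_rename, Sum.elim_comp_inl, Sum.elim_comp_inr,
      ← map_eval, h z]
  have := congrArg (fun F ↦ coeff e (coeff d (sumAlgEquiv ℂ σ σ F))) hF
  simpa only [F, map_sum, coeff_sum, coeff_coeff_sumAlgEquiv_rename_inl_mul_rename_inr,
    coeff_map, map_zero, coeff_zero] using this

section WeightedEuler

variable {R σ : Type*} [CommSemiring R] [Fintype σ]

noncomputable def weightedEuler (w : σ → R) (p : MvPolynomial σ R) : MvPolynomial σ R :=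
  ∑ j, C (w j) * (X j * pderiv j p)

theorem coeff_weightedEuler (w : σ → R) (d : σ →₀ ℕ) (p : MvPolynomial σ R) :
    coeff d (weightedEuler w p) = (∑ j, w j * d j) * coeff d p := by
  simp only [weightedEuler, coeff_sum, coeff_C_mul, coeff_X_mul_pderiv, Finset.sum_mul, mul_assoc]

theorem eval_weightedEuler (w z : σ → R) (p : MvPolynomial σ R) :
    eval z (weightedEuler w p) = ∑ j, w j * z j * eval z (pderiv j p) := by
  simp [weightedEuler, mul_assoc]

end WeightedEuler

theorem weightedEuler_eq_zero_of_sum_eval_mul_conj_add {σ ι : Type*} [Fintype σ] [Fintype ι]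
    (lam : σ → ℝ) (P : ι → MvPolynomial σ ℂ)
    (h : ∀ z : σ → ℂ, ∑ i,
      (eval z (weightedEuler (fun j ↦ (lam j : ℂ)) (P i)) * conj (eval z (P i))
        + eval z (P i) * conj (eval z (weightedEuler (fun j ↦ (lam j : ℂ)) (P i)))) = 0)
    (i : ι) :
    weightedEuler (fun j ↦ (lam j : ℂ)) (P i) = 0 := by
  set E := weightedEuler (fun j ↦ (lam j : ℂ))
  ext d
  set r : ℝ := ∑ j, lam j * d j
  have hr : ∑ j, (lam j : ℂ) * d j = r := by push_cast [r]; rfl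
  have hsum := sum_coeff_mul_conj_coeff_eq_zero (Sum.elim (E ∘ P) P) (Sum.elim P (E ∘ P))
    (fun z ↦ by simpa [Fintype.sum_sum_type, Finset.sum_add_distrib] using h z) d d
  simp only [Fintype.sum_sum_type, Sum.elim_inl, Sum.elim_inr, Function.comp_apply, E,
    coeff_weightedEuler, hr, map_mul, Complex.conj_ofReal] at hsum
  have hnormSq : 2 * r * ∑ l, Complex.normSq (coeff d (P l)) = 0 := by
    rw [← Complex.ofReal_inj, Complex.ofReal_zero, ← hsum, ← Finset.sum_add_distrib]
    push_cast
    rw [Finset.mul_sum]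
    refine Finset.sum_congr rfl fun l _ ↦ ?_
    rw [Complex.normSq_eq_conj_mul_self]
    ring
  rw [coeff_weightedEuler, hr, coeff_zero]
  rcases mul_eq_zero.1 hnormSq with hr0 | hP0
  · simp [(mul_eq_zero.1 hr0).resolve_left two_ne_zero]
  · have := (Finset.sum_eq_zero_iff_of_nonneg fun l _ ↦ Complex.normSq_nonneg _).1 hP0 i
      (Finset.mem_univ i)
    simp [Complex.normSq_eq_zero.1 this]

theorem real_diagonal_rotation_annihilates_squares_general {n k : ℕ}
    (P : Fin k → MvPolynomial (Fin n) ℂ)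
    (lam : Fin n → ℝ)
    (h : ∀ z : Fin n → ℂ,
      ∑ j, (lam j : ℂ) *
        (z j * (∑ l, eval z (pderiv j (P l)) * (starRingEnd ℂ) (eval z (P l)))
          + (starRingEnd ℂ) (z j) *
            (∑ l, eval z (P l) * (starRingEnd ℂ) (eval z (pderiv j (P l))))) = 0) :
    (∀ l, ∀ z : Fin n → ℂ, ∑ j, (lam j : ℂ) * z j * eval z (pderiv j (P l)) = 0) ∧
      (∀ z : Fin n → ℂ, ∑ j, (lam j : ℂ) * z j *
        (∑ l, eval z (pderiv j (P l)) * (starRingEnd ℂ) (eval z (P l))) = 0) := by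
  set E := weightedEuler (fun j ↦ (lam j : ℂ))
  have hE : ∀ z, ∑ l, (eval z (E (P l)) * conj (eval z (P l))
      + eval z (P l) * conj (eval z (E (P l)))) = 0 := fun z ↦ by
    rw [← h z]
    simp only [E, eval_weightedEuler, map_sum, map_mul, Complex.conj_ofReal, Finset.sum_mul,
      Finset.mul_sum, ← Finset.sum_add_distrib]
    rw [Finset.sum_comm]
    refine Finset.sum_congr rfl fun j _ ↦ Finset.sum_congr rfl fun l _ ↦ ?_
    ring
  have hP : ∀ l z, ∑ j, (lam j : ℂ) * z j * eval z (pderiv j (P l)) = 0 := fun l z ↦ by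
    rw [← eval_weightedEuler, weightedEuler_eq_zero_of_sum_eval_mul_conj_add lam P hE l, map_zero]
  refine ⟨hP, fun z ↦ ?_⟩
  calc _ = ∑ l, (∑ j, (lam j : ℂ) * z j * eval z (pderiv j (P l))) * conj (eval z (P l)) := by
        simp only [Finset.mul_sum, Finset.sum_mul, mul_assoc]
        exact Finset.sum_comm
    _ = 0 := by simp [hP]

/-- if `∑_j λ_j (z_j ∂Q/∂z_j + z̄_j ∂Q/∂z̄_j) = 0` for the sum of squares
`Q = ∑_l P_l · conj P_l` (with `P_l` homogeneous of the same degree) and `λ ∈ ℝⁿ`, then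
`∑_j λ_j z_j ∂P_l/∂z_j = 0` for every `l`, and consequently `∑_j λ_j z_j ∂Q/∂z_j = 0`. -/
theorem real_diagonal_rotation_annihilates_squares {n k m : ℕ}
    (P : Fin k → MvPolynomial (Fin n) ℂ)
    (hP : ∀ l, (P l).IsHomogeneous m)
    (lam : Fin n → ℝ)
    (h : ∀ z : Fin n → ℂ,
      ∑ j, (lam j : ℂ) *
        (z j * (∑ l, eval z (pderiv j (P l)) * (starRingEnd ℂ) (eval z (P l)))
          + (starRingEnd ℂ) (z j) *
            (∑ l, eval z (P l) * (starRingEnd ℂ) (eval z (pderiv j (P l))))) = 0) :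
    (∀ l, ∀ z : Fin n → ℂ, ∑ j, (lam j : ℂ) * z j * eval z (pderiv j (P l)) = 0) ∧
      (∀ z : Fin n → ℂ, ∑ j, (lam j : ℂ) * z j *
        (∑ l, eval z (pderiv j (P l)) * (starRingEnd ℂ) (eval z (P l))) = 0) :=
  real_diagonal_rotation_annihilates_squares_general P lam h
end

section
/- Let F₁,…,F_k and G₁,…,G_k be holomorphic homogeneous polynomials on ℂⁿ such that for every j the degree of F_j is different from the degree of G_j, and define h : ℂⁿ → ℝ by h(z) = ∑_{j=1}^k Re( F_j(z)·conj(G_j(z)) ). Then either h is identically zero, or h changes sign: there exist points z, z′ ∈ ℂⁿ with h(z) > 0 and h(z′) < 0. -/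
open MvPolynomial Finset

/-!
Rotating `z` to `c • z` with `‖c‖ = 1` multiplies the `j`-th term `F_j(z) · conj (G_j(z))` by
`c ^ (deg F_j - deg G_j)`. Averaging over the `N`-th roots of unity, with `N` larger than every
degree, therefore kills every term, since no nonzero degree difference is divisible by `N`.
So the values of `h` along the orbit `ω ^ r • z` sum to zero, and one nonzero value forces both
a positive and a negative one.
-/

theorem MvPolynomial.IsHomogeneous.eval_smul {σ R : Type*} [Fintype σ] [CommSemiring R]
    {φ : MvPolynomial σ R} {m : ℕ} (hφ : φ.IsHomogeneous m) (c : R) (z : σ → R) :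
    eval (c • z) φ = c ^ m * eval z φ := by
  rw [eval_eq', eval_eq', mul_sum]
  refine sum_congr rfl fun d hd => ?_
  have hdeg : ∑ i, d i = m := by
    rw [hφ.degree_eq_sum_deg_support hd]
    exact (sum_subset (subset_univ _) fun i _ hi => Finsupp.notMem_support_iff.mp hi).symm
  simp only [Pi.smul_apply, smul_eq_mul, mul_pow, prod_mul_distrib, prod_pow_eq_pow_sum, hdeg]
  ring

theorem MvPolynomial.IsHomogeneous.eval_smul_mul_conj_eval_smul {σ : Type*} [Fintype σ]
    {φ ψ : MvPolynomial σ ℂ} {m m' : ℕ} (hφ : φ.IsHomogeneous m) (hψ : ψ.IsHomogeneous m')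
    {c : ℂ} (hc : ‖c‖ = 1) (z : σ → ℂ) :
    eval (c • z) φ * starRingEnd ℂ (eval (c • z) ψ) =
      c ^ ((m : ℤ) - m') * (eval z φ * starRingEnd ℂ (eval z ψ)) := by
  have hc₀ : c ≠ 0 := norm_ne_zero_iff.mp (hc ▸ one_ne_zero)
  rw [hφ.eval_smul, hψ.eval_smul, map_mul, map_pow, ← Complex.inv_eq_conj hc,
    zpow_sub₀ hc₀, zpow_natCast, zpow_natCast]
  ring

theorem IsPrimitiveRoot.sum_range_pow_zpow_eq_zero {K : Type*} [Field K] {ω : K} {N : ℕ}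
    (hω : IsPrimitiveRoot ω N) {d : ℤ} (hd : ¬ (N : ℤ) ∣ d) :
    ∑ r ∈ range N, (ω ^ r) ^ d = 0 := by
  have hne : ω ^ d ≠ 1 := fun h => hd ((hω.zpow_eq_one_iff_dvd d).mp h)
  have hpow : (ω ^ d) ^ N = 1 := by
    rw [← zpow_natCast, ← zpow_mul, mul_comm, zpow_mul, zpow_natCast, hω.pow_eq_one, one_zpow]
  simp_rw [← zpow_natCast ω, ← zpow_mul, mul_comm _ d, zpow_mul, zpow_natCast]
  rw [geom_sum_eq hne, hpow, sub_self, zero_div]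

theorem sum_range_sum_eval_smul_mul_conj_eq_zero {σ ι : Type*} [Fintype σ] (s : Finset ι)
    (F G : ι → MvPolynomial σ ℂ) (mF mG : ι → ℕ)
    (hF : ∀ j ∈ s, (F j).IsHomogeneous (mF j)) (hG : ∀ j ∈ s, (G j).IsHomogeneous (mG j))
    {ω : ℂ} {N : ℕ} (hω : IsPrimitiveRoot ω N) (hN : ∀ j ∈ s, ¬ (N : ℤ) ∣ (mF j : ℤ) - mG j)
    (z : σ → ℂ) :
    ∑ r ∈ range N, ∑ j ∈ s, eval (ω ^ r • z) (F j) * starRingEnd ℂ (eval (ω ^ r • z) (G j)) =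
      0 := by
  rcases N.eq_zero_or_pos with rfl | hN₀
  · exact sum_range_zero _
  have hnorm : ∀ r : ℕ, ‖ω ^ r‖ = 1 := fun r => by rw [norm_pow, hω.norm'_eq_one hN₀.ne', one_pow]
  rw [sum_comm]
  refine sum_eq_zero fun j hj => ?_
  simp_rw [(hF j hj).eval_smul_mul_conj_eval_smul (hG j hj) (hnorm _), ← sum_mul,
    hω.sum_range_pow_zpow_eq_zero (hN j hj), zero_mul]

theorem exists_pos_forall_not_dvd_sub {ι : Type*} [Fintype ι] (a b : ι → ℕ)
    (hab : ∀ j, a j ≠ b j) : ∃ N : ℕ, 0 < N ∧ ∀ j, ¬ (N : ℤ) ∣ (a j : ℤ) - b j := by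
  refine ⟨∑ i, (a i + b i) + 1, Nat.succ_pos _, fun j hdvd => hab j ?_⟩
  have hle : a j + b j ≤ ∑ i, (a i + b i) :=
    single_le_sum (f := fun i => a i + b i) (fun _ _ => Nat.zero_le _) (mem_univ j)
  exact ((Nat.modEq_iff_dvd.mpr hdvd).eq_of_lt_of_lt (by omega) (by omega)).symm

/-- if `F_j` and `G_j` are holomorphic homogeneous polynomials of different
degrees for every `j`, then `h(z) = ∑_j Re (F_j(z) · conj (G_j(z)))` is identically zero or
changes sign. -/
theorem re_sum_mixed_degrees_changes_sign_or_vanishes {n k : ℕ}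
    (F G : Fin k → MvPolynomial (Fin n) ℂ) (mF mG : Fin k → ℕ)
    (hF : ∀ j, (F j).IsHomogeneous (mF j)) (hG : ∀ j, (G j).IsHomogeneous (mG j))
    (hdeg : ∀ j, mF j ≠ mG j) :
    (∀ z : Fin n → ℂ, (∑ j, eval z (F j) * (starRingEnd ℂ) (eval z (G j))).re = 0) ∨
    (∃ z z' : Fin n → ℂ,
      0 < (∑ j, eval z (F j) * (starRingEnd ℂ) (eval z (G j))).re ∧
      (∑ j, eval z' (F j) * (starRingEnd ℂ) (eval z' (G j))).re < 0) := by
  set h : (Fin n → ℂ) → ℝ := fun z => (∑ j, eval z (F j) * (starRingEnd ℂ) (eval z (G j))).re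
  refine or_iff_not_imp_left.mpr fun hne => ?_
  obtain ⟨z₀, hz₀⟩ := not_forall.mp hne
  obtain ⟨N, hN₀, hN⟩ := exists_pos_forall_not_dvd_sub mF mG hdeg
  have hω := Complex.isPrimitiveRoot_exp N hN₀.ne'
  set ω := Complex.exp (2 * Real.pi * Complex.I / N)
  have hsum : ∑ r ∈ range N, h (ω ^ r • z₀) = 0 := by
    rw [← Complex.re_sum, sum_range_sum_eval_smul_mul_conj_eq_zero univ F G mF mG
      (fun j _ => hF j) (fun j _ => hG j) hω (fun j _ => hN j), Complex.zero_re]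
  have hstart : ∃ r ∈ range N, h (ω ^ r • z₀) ≠ 0 :=
    ⟨0, mem_range.mpr hN₀, by rwa [pow_zero, one_smul]⟩
  obtain ⟨r, -, hpos⟩ := exists_pos_of_sum_zero_of_exists_nonzero _ hsum hstart
  obtain ⟨r', -, hneg⟩ := exists_pos_of_sum_zero_of_exists_nonzero (fun r => -h (ω ^ r • z₀))
    (by rw [sum_neg_distrib, hsum, neg_zero]) (by simpa using hstart)
  exact ⟨_, _, hpos, neg_pos.mp hneg⟩
end

section
/- Let Q : ℂⁿ → ℝ be a real-valued homogeneous polynomial in (z, z̄) with no pluriharmonic terms, and suppose the complex Hessian of Q is positive semidefinite at every point of ℂⁿ (i.e., the model hypersurface {Im w = Q} ⊂ ℂ^{n+1} is pseudoconvex). If Q is holomorphically nondegenerate, then there is no nonzero λ = (λ₁,…,λₙ) ∈ ℝⁿ such that ∑_{j=1}^n λ_j ( z_j·∂Q/∂z_j(z) + z̄_j·∂Q/∂z̄_j(z) ) = 0 for all z ∈ ℂⁿ; that is, the model admits no real diagonal rotation. -/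
/-!
Let `E_a = ∑ λ_j z_j ∂/∂z_j` and `E_b = ∑ λ_j z̄_j ∂/∂z̄_j`; on a monomial they act by
multiplication with its holomorphic and antiholomorphic `λ`-weights, and the rotation
hypothesis says `(E_a + E_b) Q = 0`, i.e. the two weights are opposite on the support of `Q`.
Along the orbit `θ ↦ (e^{iλ_jθ/2} z_j)_j` the function `Q` is therefore a bounded
trigonometric sum whose second derivative is `E_b E_a Q` at the rotated point. This equals
`⟨H v, v⟩` for the complex Hessian `H` and `v = (λ_k z̄_k)_k`, hence is `≥ 0` by
pseudoconvexity. A bounded function on `ℝ` with nonnegative second derivative is constant, so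
`E_b E_a Q = 0`; with opposite weights this forces `E_a Q = 0`, and holomorphic
nondegeneracy then gives `λ = 0`.
-/

open MvPolynomial
open scoped ComplexOrder

noncomputable section

/-- Evaluation at `z ∈ ℂⁿ` of a polynomial in the variables `(z, z̄)` (the `Sum.inl`
variables are the `z_j` and the `Sum.inr` variables are the `z̄_j`). -/
def evalCR {n : ℕ} (Q : MvPolynomial (Fin n ⊕ Fin n) ℂ) (z : Fin n → ℂ) : ℂ :=
  eval (Sum.elim z fun j => (starRingEnd ℂ) (z j)) Q

theorem nonpos_of_monotone_of_hasDerivAt_of_bounded {f f' : ℝ → ℝ}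
    (hf : ∀ x, HasDerivAt f (f' x) x) (hmono : Monotone f') {C : ℝ} (hC : ∀ x, |f x| ≤ C)
    (x₀ : ℝ) : f' x₀ ≤ 0 := by
  by_contra! hpos
  set x₁ := x₀ + (2 * C + 1) / f' x₀
  have hC0 : 0 ≤ C := (abs_nonneg _).trans (hC x₀)
  have hlen : x₁ - x₀ = (2 * C + 1) / f' x₀ := add_sub_cancel_left _ _
  have hlt : 0 < x₁ - x₀ := hlen ▸ by positivity
  obtain ⟨c, hc, hslope⟩ := exists_hasDerivAt_eq_slope f f' (sub_pos.1 hlt)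
    (HasDerivAt.continuousOn fun x _ => hf x) (fun x _ => hf x)
  have hgrowth : 2 * C + 1 ≤ f x₁ - f x₀ :=
    calc 2 * C + 1 = f' x₀ * (x₁ - x₀) := by rw [hlen, mul_div_cancel₀ _ hpos.ne']
      _ ≤ f' c * (x₁ - x₀) := mul_le_mul_of_nonneg_right (hmono hc.1.le) hlt.le
      _ = f x₁ - f x₀ := by rw [hslope, div_mul_cancel₀ _ hlt.ne']
  linarith [abs_le.1 (hC x₀), abs_le.1 (hC x₁)]

theorem eq_zero_of_monotone_of_hasDerivAt_of_bounded {f f' : ℝ → ℝ}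
    (hf : ∀ x, HasDerivAt f (f' x) x) (hmono : Monotone f') {C : ℝ} (hC : ∀ x, |f x| ≤ C)
    (x₀ : ℝ) : f' x₀ = 0 := by
  have hrefl : ∀ x, HasDerivAt (fun x => f (-x)) (-f' (-x)) x := fun x => by
    simpa [Function.comp_def] using (hf (-x)).comp x (hasDerivAt_neg x)
  have := nonpos_of_monotone_of_hasDerivAt_of_bounded hrefl
    (fun x y hxy => neg_le_neg (hmono (neg_le_neg hxy))) (fun x => hC (-x)) (-x₀)
  rw [neg_neg] at this
  exact le_antisymm (nonpos_of_monotone_of_hasDerivAt_of_bounded hf hmono hC x₀)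
    (neg_nonpos.1 this)

theorem eq_zero_of_second_deriv_nonneg_of_bounded {f f' f'' : ℝ → ℝ}
    (hf : ∀ x, HasDerivAt f (f' x) x) (hf' : ∀ x, HasDerivAt f' (f'' x) x)
    (hf'' : ∀ x, 0 ≤ f'' x) {C : ℝ} (hC : ∀ x, |f x| ≤ C) (x : ℝ) : f'' x = 0 := by
  have hzero : f' = 0 := funext <|
    eq_zero_of_monotone_of_hasDerivAt_of_bounded hf (monotone_of_hasDerivAt_nonneg hf' hf'') hC
  exact (hf' x).unique (hzero ▸ hasDerivAt_const x 0)

namespace MvPolynomial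

section

open Complex

variable {σ R : Type*}

theorem coeff_X_mul_pderiv [CommSemiring R] (i : σ) (p : MvPolynomial σ R) (d : σ →₀ ℕ) :
    coeff d (X i * pderiv i p) = d i * coeff d p := by
  classical
  induction p using induction_on' with
  | monomial m a =>
    rw [X_mul_pderiv_monomial, coeff_smul, coeff_monomial]
    split_ifs with h <;> simp [h]
  | add p q hp hq => rw [map_add, mul_add, coeff_add, coeff_add, hp, hq, mul_add]

theorem eval_bind₁ {τ : Type*} [CommSemiring R] (x : τ → R) (g : σ → MvPolynomial τ R)
    (p : MvPolynomial σ R) : eval x (bind₁ g p) = eval (fun i => eval x (g i)) p :=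
  eval₂Hom_bind₁ (RingHom.id R) x g p

theorem exists_bound_eval_exp_mul {c : σ → ℂ} (hc : ∀ i, (c i).re = 0) (x : σ → ℂ)
    (p : MvPolynomial σ ℂ) : ∃ C, ∀ θ : ℝ, ‖eval (fun i => exp (θ * c i) * x i) p‖ ≤ C := by
  obtain ⟨C, hC⟩ := (isCompact_univ_pi fun i => isCompact_sphere (0 : ℂ) ‖x i‖)
    |>.exists_bound_of_continuousOn (continuous_eval p).continuousOn
  refine ⟨C, fun θ => hC _ fun i _ => ?_⟩
  simp [norm_exp, hc]

variable [Fintype σ]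

def eulerOp [CommSemiring R] (c : σ → R) (p : MvPolynomial σ R) : MvPolynomial σ R :=
  ∑ i, C (c i) * (X i * pderiv i p)

section CommSemiring

variable [CommSemiring R] (c : σ → R)

theorem coeff_eulerOp (p : MvPolynomial σ R) (d : σ →₀ ℕ) :
    coeff d (eulerOp c p) = Finsupp.weight c d * coeff d p := by
  simp only [eulerOp, coeff_sum, coeff_C_mul, coeff_X_mul_pderiv, Finsupp.weight_eq_sum,
    Finset.sum_mul, nsmul_eq_mul]
  exact Finset.sum_congr rfl fun i _ => by ring

theorem eulerOp_add (p q : MvPolynomial σ R) :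
    eulerOp c (p + q) = eulerOp c p + eulerOp c q := by
  simp only [eulerOp, map_add, mul_add, Finset.sum_add_distrib]

theorem eulerOp_monomial (d : σ →₀ ℕ) (a : R) :
    eulerOp c (monomial d a) = monomial d (Finsupp.weight c d * a) := by
  classical
  ext d'
  rw [coeff_eulerOp, coeff_monomial, coeff_monomial]
  split_ifs with h <;> simp [h]

end CommSemiring

section CommRing

variable [CommRing R] {a b : σ → R} {p : MvPolynomial σ R}

theorem weight_add_mul_coeff_eq_zero (h : eulerOp (a + b) p = 0) (d : σ →₀ ℕ) :
    (Finsupp.weight a d + Finsupp.weight b d) * coeff d p = 0 := by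
  simpa [coeff_eulerOp, Finsupp.weight_apply, smul_add, Finsupp.sum_add] using
    congrArg (coeff d) h

theorem eulerOp_smul_sub_eulerOp_smul_sub (h : eulerOp (a + b) p = 0) (r : R) :
    eulerOp (r • (a - b)) (eulerOp (r • (a - b)) p)
      = C (-4 * r ^ 2) * eulerOp b (eulerOp a p) := by
  ext d
  have hw : Finsupp.weight (r • (a - b)) d = r * (Finsupp.weight a d - Finsupp.weight b d) := by
    simp [Finsupp.weight_apply, Finsupp.sum_sub, Finsupp.mul_sum, mul_sub, mul_left_comm r]
  rw [coeff_C_mul]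
  simp only [coeff_eulerOp, hw]
  linear_combination r ^ 2 * (Finsupp.weight a d + Finsupp.weight b d) *
    weight_add_mul_coeff_eq_zero h d

theorem eulerOp_eq_zero_of_eulerOp_eulerOp_eq_zero [NoZeroDivisors R]
    (h : eulerOp (a + b) p = 0) (h' : eulerOp b (eulerOp a p) = 0) : eulerOp a p = 0 := by
  ext d
  have hd' := congrArg (coeff d) h'
  simp only [coeff_eulerOp, coeff_zero] at hd' ⊢
  refine pow_eq_zero_iff (n := 2) two_ne_zero |>.1 ?_
  linear_combination (Finsupp.weight a d * coeff d p) * weight_add_mul_coeff_eq_zero h d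
    - coeff d p * hd'

end CommRing

theorem eval_exp_mul_monomial (c x : σ → ℂ) (t : ℂ) (d : σ →₀ ℕ) (a : ℂ) :
    eval (fun i => exp (t * c i) * x i) (monomial d a)
      = exp (t * Finsupp.weight c d) * eval x (monomial d a) := by
  rw [eval_monomial, eval_monomial, Finsupp.prod_fintype _ _ (by simp),
    Finsupp.prod_fintype _ _ (by simp)]
  simp only [mul_pow, Finset.prod_mul_distrib, ← exp_nat_mul]
  rw [← exp_sum, Finsupp.weight_eq_sum, Finset.mul_sum]
  simp only [nsmul_eq_mul, mul_left_comm t]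
  ring

theorem hasDerivAt_eval_exp_mul (c x : σ → ℂ) (p : MvPolynomial σ ℂ) (t : ℂ) :
    HasDerivAt (fun t => eval (fun i => exp (t * c i) * x i) p)
      (eval (fun i => exp (t * c i) * x i) (eulerOp c p)) t := by
  induction p using induction_on' with
  | monomial d a =>
    simp only [eval_exp_mul_monomial, eulerOp_monomial]
    refine ((hasDerivAt_mul_const _).cexp.mul_const (eval x (monomial d a))).congr_deriv ?_
    simp only [eval_monomial]
    ring
  | add p q hp hq => simpa only [map_add, eulerOp_add] using hp.fun_add hq

theorem re_eval_eulerOp_eulerOp_eq_zero {c : σ → ℂ} (hc : ∀ i, (c i).re = 0) (x : σ → ℂ)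
    (p : MvPolynomial σ ℂ)
    (hnonneg : ∀ θ : ℝ, 0 ≤ (eval (fun i => exp (θ * c i) * x i) (eulerOp c (eulerOp c p))).re) :
    (eval x (eulerOp c (eulerOp c p))).re = 0 := by
  obtain ⟨C, hC⟩ := exists_bound_eval_exp_mul hc x p
  have h := eq_zero_of_second_deriv_nonneg_of_bounded
    (fun θ => (hasDerivAt_eval_exp_mul c x p θ).real_of_complex)
    (fun θ => (hasDerivAt_eval_exp_mul c x (eulerOp c p) θ).real_of_complex) hnonneg
    (fun θ => (abs_re_le_norm _).trans (hC θ)) 0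
  simpa using h

end

end MvPolynomial

section CR

variable {n : ℕ}

theorem eq_zero_of_evalCR_eq_zero {p : MvPolynomial (Fin n ⊕ Fin n) ℂ}
    (h : ∀ z, evalCR p z = 0) : p = 0 := by
  -- `z = x + i y`, `z̄ = x - i y` turns the points `(z, z̄)` into the real points `(x, y)`
  set g : Fin n ⊕ Fin n → MvPolynomial (Fin n ⊕ Fin n) ℂ :=
    Sum.elim (fun j => X (.inl j) + C Complex.I * X (.inr j))
      (fun j => X (.inl j) - C Complex.I * X (.inr j))
  have hq : bind₁ g p = 0 := by
    refine funext_set (fun _ => Set.range ((↑) : ℝ → ℂ))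
      (fun _ => Set.infinite_range_of_injective Complex.ofReal_injective) fun x hx => ?_
    choose t ht using hx
    have hx : (fun i => eval x (g i)) = Sum.elim (fun j => x (.inl j) + Complex.I * x (.inr j))
        fun j => (starRingEnd ℂ) (x (.inl j) + Complex.I * x (.inr j)) := by
      ext (j | j)
      · simp [g]
      · simp [g, ← ht (.inl j) trivial, ← ht (.inr j) trivial, sub_eq_add_neg]
    rw [map_zero, eval_bind₁, hx]
    exact h _
  refine MvPolynomial.funext fun u => ?_
  set v : Fin n ⊕ Fin n → ℂ := Sum.elim (fun j => (u (.inl j) + u (.inr j)) / 2)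
    (fun j => (u (.inl j) - u (.inr j)) / (2 * Complex.I))
  have hv : (fun i => eval v (g i)) = u := by
    ext (j | j) <;> simp [g, v] <;> field_simp <;> ring
  rw [← hv, ← eval_bind₁, hq, map_zero, map_zero]

theorem evalCR_eulerOp (c : Fin n ⊕ Fin n → ℂ) (p : MvPolynomial (Fin n ⊕ Fin n) ℂ)
    (z : Fin n → ℂ) :
    evalCR (eulerOp c p) z = ∑ j, (c (.inl j) * (z j * evalCR (pderiv (.inl j) p) z)
      + c (.inr j) * ((starRingEnd ℂ) (z j) * evalCR (pderiv (.inr j) p) z)) := by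
  simp [evalCR, eulerOp, Fintype.sum_sum_type, Finset.sum_add_distrib]

/-- `eulerOp (zWeight lam)` and `eulerOp (zbarWeight lam)` are `∑ λ_j z_j ∂/∂z_j` and
`∑ λ_j z̄_j ∂/∂z̄_j`; their sum is the real diagonal rotation field. -/
def zWeight (lam : Fin n → ℝ) : Fin n ⊕ Fin n → ℂ := Sum.elim (fun j => (lam j : ℂ)) 0

def zbarWeight (lam : Fin n → ℝ) : Fin n ⊕ Fin n → ℂ := Sum.elim 0 (fun j => (lam j : ℂ))

open Matrix in
theorem evalCR_eulerOp_zbarWeight_zWeight (lam : Fin n → ℝ)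
    (Q : MvPolynomial (Fin n ⊕ Fin n) ℂ) (z : Fin n → ℂ) :
    evalCR (eulerOp (zbarWeight lam) (eulerOp (zWeight lam) Q)) z
      = star (fun k => lam k * (starRingEnd ℂ) (z k)) ⬝ᵥ
        ((Matrix.of fun i k : Fin n => evalCR (pderiv (.inr k) (pderiv (.inl i) Q)) z) *ᵥ
          fun k => lam k * (starRingEnd ℂ) (z k)) := by
  rw [evalCR_eulerOp]
  simp [zWeight, zbarWeight, eulerOp, Fintype.sum_sum_type, evalCR, dotProduct, Matrix.mulVec,
    Finset.mul_sum]
  rw [Finset.sum_comm]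
  exact Finset.sum_congr rfl fun i _ => Finset.sum_congr rfl fun k _ => by ring

theorem evalCR_eulerOp_zbarWeight_zWeight_nonneg (lam : Fin n → ℝ)
    {Q : MvPolynomial (Fin n ⊕ Fin n) ℂ}
    (hpsd : ∀ z : Fin n → ℂ,
      (Matrix.of fun i k : Fin n => evalCR (pderiv (.inr k) (pderiv (.inl i) Q)) z).PosSemidef)
    (z : Fin n → ℂ) : 0 ≤ evalCR (eulerOp (zbarWeight lam) (eulerOp (zWeight lam) Q)) z := by
  rw [evalCR_eulerOp_zbarWeight_zWeight]
  exact (hpsd z).dotProduct_mulVec_nonneg _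

theorem eval_exp_mul_sumElim_eq_evalCR (lam : Fin n → ℝ) (p : MvPolynomial (Fin n ⊕ Fin n) ℂ)
    (z : Fin n → ℂ) (θ : ℝ) :
    eval (fun i => Complex.exp (θ * ((Complex.I / 2) • (zWeight lam - zbarWeight lam)) i)
        * Sum.elim z (fun j => (starRingEnd ℂ) (z j)) i) p
      = evalCR p fun j => Complex.exp (θ * (Complex.I / 2 * lam j)) * z j := by
  rw [evalCR]
  congr 2
  ext (j | j)
  · simp [zWeight, zbarWeight]
  · simp [zWeight, zbarWeight, ← Complex.exp_conj, map_div₀, map_ofNat, neg_div]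

theorem evalCR_eulerOp_zbarWeight_zWeight_eq_zero {lam : Fin n → ℝ}
    {Q : MvPolynomial (Fin n ⊕ Fin n) ℂ}
    (hpsd : ∀ z : Fin n → ℂ,
      (Matrix.of fun i k : Fin n => evalCR (pderiv (.inr k) (pderiv (.inl i) Q)) z).PosSemidef)
    (hrot : eulerOp (zWeight lam + zbarWeight lam) Q = 0) (z : Fin n → ℂ) :
    evalCR (eulerOp (zbarWeight lam) (eulerOp (zWeight lam) Q)) z = 0 := by
  set c := (Complex.I / 2) • (zWeight lam - zbarWeight lam)
  have hc : ∀ i, (c i).re = 0 := by rintro (j | j) <;> simp [c, zWeight, zbarWeight]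
  -- the factor `-4 r ^ 2` of `eulerOp_smul_sub_eulerOp_smul_sub` is `1` for `r = I / 2`
  have hcc : eulerOp c (eulerOp c Q) = eulerOp (zbarWeight lam) (eulerOp (zWeight lam) Q) := by
    rw [eulerOp_smul_sub_eulerOp_smul_sub hrot, div_pow, Complex.I_sq]
    norm_num
  have hnonneg := evalCR_eulerOp_zbarWeight_zWeight_nonneg lam hpsd
  have hre := re_eval_eulerOp_eulerOp_eq_zero hc (Sum.elim z fun j => (starRingEnd ℂ) (z j)) Q
    fun θ => by
      rw [hcc, eval_exp_mul_sumElim_eq_evalCR]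
      exact (Complex.nonneg_iff.1 (hnonneg _)).1
  rw [hcc] at hre
  exact Complex.ext hre (Complex.nonneg_iff.1 (hnonneg z)).2.symm

end CR

theorem pseudoconvex_model_no_real_diagonal_rotation_general {n : ℕ}
    (Q : MvPolynomial (Fin n ⊕ Fin n) ℂ)
    -- the complex Hessian of `Q` is positive semidefinite at every point
    (hpsd : ∀ z : Fin n → ℂ,
      (Matrix.of fun i k : Fin n =>
        evalCR (pderiv (Sum.inr k) (pderiv (Sum.inl i) Q)) z).PosSemidef)
    -- `Q` is holomorphically nondegenerate
    (hnd : ∀ f : Fin n → MvPolynomial (Fin n) ℂ,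
      (∀ z : Fin n → ℂ, ∑ j, eval z (f j) * evalCR (pderiv (Sum.inl j) Q) z = 0) → f = 0) :
    ¬ ∃ lam : Fin n → ℝ, lam ≠ 0 ∧ ∀ z : Fin n → ℂ,
      ∑ j, (lam j : ℂ) * (z j * evalCR (pderiv (Sum.inl j) Q) z
        + (starRingEnd ℂ) (z j) * evalCR (pderiv (Sum.inr j) Q) z) = 0 := by
  rintro ⟨lam, hlam, hrot⟩
  have hR : eulerOp (zWeight lam + zbarWeight lam) Q = 0 :=
    eq_zero_of_evalCR_eq_zero fun z => by
      simpa [evalCR_eulerOp, zWeight, zbarWeight, mul_add] using hrot z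
  have hE : eulerOp (zWeight lam) Q = 0 := eulerOp_eq_zero_of_eulerOp_eulerOp_eq_zero hR
    (eq_zero_of_evalCR_eq_zero (evalCR_eulerOp_zbarWeight_zWeight_eq_zero hpsd hR))
  have hf := hnd (fun j => C (lam j : ℂ) * X j) fun z => by
    have h := evalCR_eulerOp (zWeight lam) Q z
    rw [hE] at h
    simpa [zWeight, mul_assoc, evalCR] using h.symm
  exact hlam (funext fun j => by simpa using congrFun hf j)

/-- a pseudoconvex holomorphically nondegenerate model, given by a real-valued
homogeneous polynomial `Q` in `(z, z̄)` with no pluriharmonic terms whose complex Hessian is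
everywhere positive semidefinite, admits no nonzero real diagonal rotation. -/
theorem pseudoconvex_model_no_real_diagonal_rotation {n m : ℕ}
    (Q : MvPolynomial (Fin n ⊕ Fin n) ℂ)
    -- `Q` is real-valued
    (hreal : ∀ z : Fin n → ℂ, (evalCR Q z).im = 0)
    -- `Q` is homogeneous of degree `m` in `(z, z̄)`
    (hhom : Q.IsHomogeneous m)
    -- `Q` has no pluriharmonic terms
    (hplh : ∀ d ∈ Q.support, (∃ j, d (Sum.inl j) ≠ 0) ∧ (∃ j, d (Sum.inr j) ≠ 0))
    -- the complex Hessian of `Q` is positive semidefinite at every point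
    (hpsd : ∀ z : Fin n → ℂ,
      (Matrix.of fun i k : Fin n =>
        evalCR (pderiv (Sum.inr k) (pderiv (Sum.inl i) Q)) z).PosSemidef)
    -- `Q` is holomorphically nondegenerate
    (hnd : ∀ f : Fin n → MvPolynomial (Fin n) ℂ,
      (∀ z : Fin n → ℂ, ∑ j, eval z (f j) * evalCR (pderiv (Sum.inl j) Q) z = 0) → f = 0) :
    ¬ ∃ lam : Fin n → ℝ, lam ≠ 0 ∧ ∀ z : Fin n → ℂ,
      ∑ j, (lam j : ℂ) * (z j * evalCR (pderiv (Sum.inl j) Q) z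
        + (starRingEnd ℂ) (z j) * evalCR (pderiv (Sum.inr j) Q) z) = 0 :=
  pseudoconvex_model_no_real_diagonal_rotation_general Q hpsd hnd
end
end

section
/- Let P and S be holomorphic polynomials on ℂ² and define R : ℂ² → ℝ by R(z) = P(z)·conj(S(z)) + S(z)·conj(P(z)). Then for every z ∈ ℂ², the determinant of the complex Hessian of R satisfies det( (∂²R/∂z_i∂z̄_k(z))_{i,k=1,2} ) = − | ∂P/∂z₁(z)·∂S/∂z₂(z) − ∂P/∂z₂(z)·∂S/∂z₁(z) |² ≤ 0. In particular, if the holomorphic polynomial ∂P/∂z₁·∂S/∂z₂ − ∂P/∂z₂·∂S/∂z₁ is not identically zero, then the complex Hessian of R is not positive semidefinite at some point, so the model hypersurface {Im w = R} ⊂ ℂ³ is not pseudoconvex. -/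
open MvPolynomial
open scoped ComplexOrder

noncomputable section

/-- The complex Hessian of `R = P·conj S + S·conj P` at `z ∈ ℂ²`, where `P`, `S` are
holomorphic polynomials on `ℂ²`: its `(i,k)` entry is `∂²R/∂z_i∂z̄_k (z)`. -/
def hessPS (P S : MvPolynomial (Fin 2) ℂ) (z : Fin 2 → ℂ) : Matrix (Fin 2) (Fin 2) ℂ :=
  Matrix.of fun i k =>
    eval z (pderiv i P) * (starRingEnd ℂ) (eval z (pderiv k S)) +
      eval z (pderiv i S) * (starRingEnd ℂ) (eval z (pderiv k P))

lemma det_hess (P S : MvPolynomial (Fin 2) ℂ) (z : Fin 2 → ℂ) :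
    (hessPS P S z).det =
      -(Complex.normSq (eval z (pderiv 0 P) * eval z (pderiv 1 S) -
          eval z (pderiv 1 P) * eval z (pderiv 0 S)) : ℂ) := by
  rw [Matrix.det_fin_two]
  simp only [hessPS, Matrix.of_apply]
  rw [← Complex.mul_conj]
  simp only [map_sub, map_mul, Complex.conj_conj]
  ring

/-- for `R = P·conj S + S·conj P` the determinant of the complex Hessian equals
`−|P_{z₁}S_{z₂} − P_{z₂}S_{z₁}|² ≤ 0`; in particular if the holomorphic polynomial
`P_{z₁}S_{z₂} − P_{z₂}S_{z₁}` is not identically zero, the complex Hessian fails to be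
positive semidefinite at some point, so the model `{Im w = R} ⊂ ℂ³` is not pseudoconvex. -/
theorem det_hessian_chain_of_length_two (P S : MvPolynomial (Fin 2) ℂ) :
    (∀ z : Fin 2 → ℂ,
      (hessPS P S z).det =
        -(Complex.normSq (eval z (pderiv 0 P) * eval z (pderiv 1 S) -
            eval z (pderiv 1 P) * eval z (pderiv 0 S)) : ℂ) ∧
      (hessPS P S z).det.re ≤ 0) ∧
    ((pderiv 0 P * pderiv 1 S - pderiv 1 P * pderiv 0 S ≠ 0) →
      ∃ z : Fin 2 → ℂ, ¬ (hessPS P S z).PosSemidef) := by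
  constructor
  · intro z
    refine ⟨det_hess P S z, ?_⟩
    rw [det_hess P S z]
    simp [Complex.normSq_nonneg]
  · intro h
    obtain ⟨z, hz⟩ : ∃ z : Fin 2 → ℂ,
        eval z (pderiv 0 P * pderiv 1 S - pderiv 1 P * pderiv 0 S) ≠ 0 := by
      by_contra hc
      push_neg at hc
      exact h (MvPolynomial.funext fun x => by simpa using hc x)
    refine ⟨z, fun hpsd => ?_⟩
    have hdet : (hessPS P S z).det.re < 0 := by
      rw [det_hess P S z]
      simp only [Complex.neg_re, Complex.ofReal_re, neg_neg, Left.neg_neg_iff]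
      rw [Complex.normSq_pos]
      simpa using hz
    have := hpsd.1.det_eq_prod_eigenvalues
    rw [this] at hdet
    rw [← RCLike.ofReal_prod] at hdet
    norm_num at hdet
    have h0 := hpsd.eigenvalues_nonneg 0
    have h1 := hpsd.eigenvalues_nonneg 1
    nlinarith
end
end

section
/- Fix positive integer weights (w₁,w₂) on the polynomial ring ℂ[z₁,z₂], let μ > 0, and let f₁, f₂ be weighted homogeneous polynomials with f_i of weighted degree w_i + μ, not both identically zero (so Y = f₁·∂/∂z₁ + f₂·∂/∂z₂ is a nonzero homogeneous holomorphic vector field of positive weighted degree). Then for every ν, the ℂ-vector space { P ∈ ℂ[z₁,z₂] : P is weighted homogeneous of weighted degree ν and f₁·∂P/∂z₁ + f₂·∂P/∂z₂ = 0 } has dimension at most one. -/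
open MvPolynomial

/-!
On weighted homogeneous polynomials of weighted degree `ν` the Euler field `∑ wᵢ zᵢ ∂ᵢ` acts as
multiplication by `ν`. For `P` killed by `Y = ∑ fᵢ ∂ᵢ` this gives two linear equations for
`(∂₁P, ∂₂P)`, and Cramer's rule yields `D ∂₁P = ν f₂ P` and `D ∂₂P = -ν f₁ P` with
`D = w₁ z₁ f₂ - w₂ z₂ f₁`. When `ν ≠ 0`, `D = 0` forces `P = 0`; otherwise any two solutions satisfy
`P ∂ᵢQ = Q ∂ᵢP`, i.e. `d(P/Q) = 0`, and unique factorisation in `ℂ[z₁, z₂]` turns this into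
`P ∈ ℂ Q`. When `ν = 0` the positive weights force `P` to be constant.
-/

theorem Submodule.rank_le_one_of_forall_mem_span_singleton {K V : Type*} [DivisionRing K]
    [AddCommGroup V] [Module K V] (s : Submodule K V)
    (h : ∀ v ∈ s, ∀ u ∈ s, u ≠ 0 → v ∈ K ∙ u) : Module.rank K s ≤ 1 := by
  rw [rank_submodule_le_one_iff]
  by_cases hs : ∃ u ∈ s, u ≠ 0
  · obtain ⟨u, hu, hu0⟩ := hs
    exact ⟨u, hu, fun v hv => h v hv u hu hu0⟩
  · push Not at hs
    exact ⟨0, s.zero_mem, fun v hv => by simp [hs v hv]⟩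

namespace MvPolynomial

section CommSemiring

variable {R σ : Type*} [CommSemiring R] {i : σ} {p : MvPolynomial σ R}

theorem degreeOf_pderiv_lt (h : pderiv i p ≠ 0) : degreeOf i (pderiv i p) < degreeOf i p := by
  have hlt : ∀ m ∈ (pderiv i p).support, m i < degreeOf i p := by
    intro m hm
    rw [mem_support_iff, coeff_pderiv] at hm
    simpa using monomial_le_degreeOf i (mem_support_iff.mpr (left_ne_zero_of_mul hm))
  obtain ⟨m₀, hm₀⟩ := ne_zero_iff.mp h
  exact (degreeOf_lt_iff ((Nat.zero_le _).trans_lt (hlt m₀ (mem_support_iff.mpr hm₀)))).mpr hlt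

theorem not_dvd_pderiv [NoZeroDivisors R] (h : pderiv i p ≠ 0) : ¬p ∣ pderiv i p := by
  rintro ⟨q, hq⟩
  have hp : p ≠ 0 := by rintro rfl; exact h (map_zero _)
  have hq0 : q ≠ 0 := by rintro rfl; exact h (by rw [hq, mul_zero])
  have hlt := degreeOf_pderiv_lt h
  rw [hq, degreeOf_mul_eq hp hq0] at hlt
  omega

theorem eq_C_of_forall_pderiv_eq_zero [NoZeroDivisors R] [CharZero R]
    (h : ∀ i, pderiv i p = 0) : p = C (coeff 0 p) := by
  rw [← totalDegree_eq_zero_iff_eq_C, totalDegree_eq_zero_iff]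
  intro m hm x
  by_contra hx
  have hcoeff : coeff (m - Finsupp.single x 1) (pderiv x p) ≠ 0 := by
    rw [coeff_pderiv,
      tsub_add_cancel_of_le (Finsupp.single_le_iff.mpr (Nat.one_le_iff_ne_zero.mpr hx))]
    exact mul_ne_zero (mem_support_iff.mp hm) (Nat.cast_add_one_ne_zero _)
  exact hcoeff (by rw [h x, coeff_zero])

theorem eq_C_of_isWeightedHomogeneous_zero {w : σ → ℕ} (hw : ∀ i, w i ≠ 0)
    (h : p.IsWeightedHomogeneous w 0) : p = C (coeff 0 p) := by
  rw [← totalDegree_eq_zero_iff_eq_C, totalDegree_eq_zero_iff,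
    ← weightedTotalDegree_eq_zero_iff (nonTorsionWeight_of hw)]
  exact isWeightedHomogeneous_zero_iff_weightedTotalDegree_eq_zero.mp h

end CommSemiring

section Field

variable {K σ : Type*} [Field K] [CharZero K] {P Q r : MvPolynomial σ K}

theorem exists_pderiv_ne_zero (hQ : Q ≠ 0) (hu : ¬IsUnit Q) : ∃ i, pderiv i Q ≠ 0 := by
  by_contra! h
  have hQC := eq_C_of_forall_pderiv_eq_zero h
  have hc : coeff 0 Q ≠ 0 := fun h0 => hQ (by rw [hQC, h0, C_0])
  exact hu (hQC ▸ hc.isUnit.map C)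

/-- With `Q = r ^ (k + 1) * b` and `¬r ∣ b`, cancelling `r ^ k` in the relation leaves
`r ∣ (k + 1) * P * ∂ᵢr * b`. -/
theorem dvd_of_mul_pderiv_eq {i : σ} (hr : Prime r) (hri : ¬r ∣ pderiv i r) (hQ : Q ≠ 0)
    (hrQ : r ∣ Q) (h : P * pderiv i Q = Q * pderiv i P) : r ∣ P := by
  obtain ⟨n, b, hrb, rfl⟩ := WfDvdMonoid.max_power_factor' hQ hr.not_isUnit
  obtain ⟨k, rfl⟩ : ∃ k, n = k + 1 :=
    Nat.exists_eq_succ_of_ne_zero (by rintro rfl; exact hrb (by simpa using hrQ))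
  rw [pderiv_mul, pderiv_pow, Nat.add_sub_cancel] at h
  have hdvd : r ∣ P * ((k + 1 : ℕ) : MvPolynomial σ K) * pderiv i r * b :=
    ⟨b * pderiv i P - P * pderiv i b, mul_left_cancel₀ (pow_ne_zero k hr.ne_zero)
      (by linear_combination h)⟩
  have hunit : IsUnit ((k + 1 : ℕ) : MvPolynomial σ K) := by
    simpa using (Nat.cast_add_one_ne_zero (R := K) k).isUnit.map C
  rcases hr.dvd_or_dvd hdvd with hdvd | hdvd
  · rcases hr.dvd_or_dvd hdvd with hdvd | hdvd
    · rcases hr.dvd_or_dvd hdvd with hdvd | hdvd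
      · exact hdvd
      · exact absurd (isUnit_of_dvd_unit hdvd hunit) hr.not_isUnit
    · exact absurd hdvd hri
  · exact absurd hdvd hrb

theorem exists_eq_smul_of_mul_pderiv_eq (hQ : Q ≠ 0)
    (h : ∀ i, P * pderiv i Q = Q * pderiv i P) : ∃ c : K, P = c • Q := by
  induction Q using UniqueFactorizationMonoid.induction_on_prime generalizing P with
  | h₁ => exact absurd rfl hQ
  | h₂ u hu =>
    obtain ⟨a, ha, rfl⟩ := isUnit_iff_eq_C_of_isReduced.mp hu
    have hP : ∀ i, pderiv i P = 0 := fun i => by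
      simpa [ha.ne_zero] using (h i).symm
    refine ⟨coeff 0 P / a, ?_⟩
    rw [smul_eq_C_mul, ← C_mul, div_mul_cancel₀ _ ha.ne_zero]
    exact eq_C_of_forall_pderiv_eq_zero hP
  | h₃ a r ha hr ih =>
    obtain ⟨i, hi⟩ := exists_pderiv_ne_zero hr.ne_zero hr.not_isUnit
    obtain ⟨P', rfl⟩ := dvd_of_mul_pderiv_eq hr (not_dvd_pderiv hi) hQ (dvd_mul_right r a) (h i)
    have hrel : ∀ j, P' * pderiv j a = a * pderiv j P' := fun j => by
      have hj := h j
      rw [pderiv_mul, pderiv_mul] at hj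
      exact mul_left_cancel₀ (mul_ne_zero hr.ne_zero hr.ne_zero) (by linear_combination hj)
    obtain ⟨c, hc⟩ := ih ha hrel
    exact ⟨c, by rw [hc, mul_smul_comm]⟩

end Field

section TwoVariables

variable {R : Type*} [CommRing R] {w : Fin 2 → ℕ} {ν : ℕ} {f : Fin 2 → MvPolynomial (Fin 2) R}
  {P Q : MvPolynomial (Fin 2) R}

/-- The determinant of the coefficient vectors of the Euler field `∑ wᵢ zᵢ ∂ᵢ` and of
`∑ fᵢ ∂ᵢ`. -/
noncomputable def eulerDet (w : Fin 2 → ℕ) (f : Fin 2 → MvPolynomial (Fin 2) R) :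
    MvPolynomial (Fin 2) R :=
  (w 0 : MvPolynomial (Fin 2) R) * X 0 * f 1 - (w 1 : MvPolynomial (Fin 2) R) * X 1 * f 0

theorem IsWeightedHomogeneous.eulerDet_mul_pderiv (hP : P.IsWeightedHomogeneous w ν)
    (hY : f 0 * pderiv 0 P + f 1 * pderiv 1 P = 0) :
    eulerDet w f * pderiv 0 P = ν * f 1 * P ∧ eulerDet w f * pderiv 1 P = -(ν * f 0 * P) := by
  have hE := hP.sum_weight_X_mul_pderiv
  simp only [Fin.sum_univ_two, nsmul_eq_mul] at hE
  unfold eulerDet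
  constructor
  · linear_combination f 1 * hE - w 1 * X 1 * hY
  · linear_combination w 0 * X 0 * hY - f 0 * hE

theorem eulerDet_ne_zero [IsDomain R] [CharZero R] (hf : f ≠ 0) (hν : ν ≠ 0)
    (hQ : Q.IsWeightedHomogeneous w ν) (hY : f 0 * pderiv 0 Q + f 1 * pderiv 1 Q = 0)
    (hQ0 : Q ≠ 0) : eulerDet w f ≠ 0 := by
  intro hD
  obtain ⟨h0, h1⟩ := hQ.eulerDet_mul_pderiv hY
  simp only [hD, zero_mul, eq_comm, mul_eq_zero, Nat.cast_eq_zero, hν, false_or, hQ0, or_false,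
    neg_eq_zero] at h0 h1
  apply hf
  ext1 i
  fin_cases i
  exacts [h1, h0]

theorem mul_pderiv_eq_of_eulerDet_ne_zero [IsDomain R] (hD : eulerDet w f ≠ 0)
    (hP : P.IsWeightedHomogeneous w ν) (hPY : f 0 * pderiv 0 P + f 1 * pderiv 1 P = 0)
    (hQ : Q.IsWeightedHomogeneous w ν) (hQY : f 0 * pderiv 0 Q + f 1 * pderiv 1 Q = 0) :
    ∀ i, P * pderiv i Q = Q * pderiv i P := by
  obtain ⟨hP0, hP1⟩ := hP.eulerDet_mul_pderiv hPY
  obtain ⟨hQ0, hQ1⟩ := hQ.eulerDet_mul_pderiv hQY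
  refine Fin.forall_fin_two.mpr ⟨mul_left_cancel₀ hD ?_, mul_left_cancel₀ hD ?_⟩
  · linear_combination P * hQ0 - Q * hP0
  · linear_combination P * hQ1 - Q * hP1

end TwoVariables

end MvPolynomial

theorem kernel_of_positive_weight_field_dim_le_one_general
    (w : Fin 2 → ℕ) (hw : ∀ i, 0 < w i)
    (f : Fin 2 → MvPolynomial (Fin 2) ℂ)
    (hfne : f ≠ 0) (ν : ℕ) :
    Module.rank ℂ
      ((weightedHomogeneousSubmodule ℂ w ν) ⊓
        (LinearMap.ker
          ((LinearMap.mulLeft ℂ (f 0)) ∘ₗ (pderiv (0 : Fin 2)).toLinearMap +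
            (LinearMap.mulLeft ℂ (f 1)) ∘ₗ (pderiv (1 : Fin 2)).toLinearMap)) :
        Submodule ℂ (MvPolynomial (Fin 2) ℂ)) ≤ 1 := by
  refine Submodule.rank_le_one_of_forall_mem_span_singleton _ fun P hP Q hQ hQ0 => ?_
  simp only [Submodule.mem_inf, mem_weightedHomogeneousSubmodule, LinearMap.mem_ker,
    LinearMap.add_apply, LinearMap.coe_comp, Derivation.coeFn_coe, Function.comp_apply,
    LinearMap.mulLeft_apply] at hP hQ
  obtain ⟨hPh, hPY⟩ := hP
  obtain ⟨hQh, hQY⟩ := hQ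
  have hrel : ∀ i, P * pderiv i Q = Q * pderiv i P := by
    obtain rfl | hν := eq_or_ne ν 0
    · intro i
      rw [eq_C_of_isWeightedHomogeneous_zero (fun i => (hw i).ne') hPh,
        eq_C_of_isWeightedHomogeneous_zero (fun i => (hw i).ne') hQh]
      simp only [pderiv_C, mul_zero]
    · exact mul_pderiv_eq_of_eulerDet_ne_zero (eulerDet_ne_zero hfne hν hQh hQY hQ0)
        hPh hPY hQh hQY
  obtain ⟨c, rfl⟩ := exists_eq_smul_of_mul_pderiv_eq hQ0 hrel
  exact Submodule.smul_mem _ c (Submodule.mem_span_singleton_self Q)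

/-- for a nonzero homogeneous holomorphic vector field
`Y = f₁ ∂/∂z₁ + f₂ ∂/∂z₂` of positive weighted degree `μ` (so `f_i` is weighted homogeneous
of weighted degree `w_i + μ`), the space of weighted homogeneous polynomials of a given
weighted degree `ν` annihilated by `Y` has complex dimension at most one. -/
theorem kernel_of_positive_weight_field_dim_le_one
    (w : Fin 2 → ℕ) (hw : ∀ i, 0 < w i) (μ : ℕ) (hμ : 0 < μ)
    (f : Fin 2 → MvPolynomial (Fin 2) ℂ)
    (hf : ∀ i, (f i).IsWeightedHomogeneous w (w i + μ))
    (hfne : f ≠ 0) (ν : ℕ) :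
    Module.rank ℂ
      ((weightedHomogeneousSubmodule ℂ w ν) ⊓
        (LinearMap.ker
          ((LinearMap.mulLeft ℂ (f 0)) ∘ₗ (pderiv (0 : Fin 2)).toLinearMap +
            (LinearMap.mulLeft ℂ (f 1)) ∘ₗ (pderiv (1 : Fin 2)).toLinearMap)) :
        Submodule ℂ (MvPolynomial (Fin 2) ℂ)) ≤ 1 :=
  kernel_of_positive_weight_field_dim_le_one_general w hw f hfne ν
end

section
/- Let A₁,…,A_d be n×n complex Hermitian matrices, b ∈ ℝ^d, a ∈ ℂ^d, and fix s ∈ {1,…,d}. For t in a real neighborhood of 0 set a(t) := a + t·e_s (e_s the s-th standard basis vector), P(t) := ∑_{j=1}^d a(t)_j A_j and A(t) := ∑_{j=1}^d (b_j − a(t)_j − conj(a(t)_j)) A_j, and write P := P(0), A := A(0). Let t ↦ X(t) be a family of n×n complex matrices, differentiable at t = 0, with operator norm ‖X(t)‖ < 1 for all t, satisfying the matrix equation P(t)·X(t)² + A(t)·X(t) + conj-transpose(P(t)) = 0 for all t. Assume A and I + A⁻¹PX are invertible, where X := X(0), and that ‖(I + A⁻¹PX)⁻¹A⁻¹P‖·‖X‖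 < 1. Then the derivative X′(0) is given by the absolutely convergent series X′(0) = ∑_{r=0}^∞ (−1)^{r+1} · ( (I + A⁻¹PX)⁻¹A⁻¹P )^r · (I + A⁻¹PX)⁻¹ · A⁻¹ · A_s · (I − X)² · X^r. -/
open Matrix
open scoped Matrix.Norms.L2Operator

noncomputable section

/-- `P(a) = ∑_j a_j A_j`. -/
def Pmat {n d : ℕ} (A : Fin d → Matrix (Fin n) (Fin n) ℂ) (a : Fin d → ℂ) :
    Matrix (Fin n) (Fin n) ℂ :=
  ∑ j, a j • A j

/-- `A(a) = ∑_j (b_j − a_j − conj a_j) A_j`. -/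
def Amat {n d : ℕ} (A : Fin d → Matrix (Fin n) (Fin n) ℂ) (b : Fin d → ℝ)
    (a : Fin d → ℂ) : Matrix (Fin n) (Fin n) ℂ :=
  ∑ j, ((b j : ℂ) - a j - (starRingEnd ℂ) (a j)) • A j

/-- `a(t) = a + t·e_s`. -/
def aT {d : ℕ} (a : Fin d → ℂ) (s : Fin d) (t : ℝ) : Fin d → ℂ :=
  fun j => a j + (t : ℂ) * (if j = s then 1 else 0)

/-!
Differentiating the equation at `t = 0`, where `P(t)ᴴ = Pᴴ + t A_s` because `A_s` is Hermitian,
gives `A X' + P X X' + P X' X = -A_s (I - X)²`, i.e. the fixed-point equation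
`X' = -M - C X' X` with `C = (I + A⁻¹PX)⁻¹A⁻¹P` and `M = (I + A⁻¹PX)⁻¹A⁻¹A_s(I - X)²`.
Unfolding it `N` times, `X'` differs from the `N`-th partial sum of `∑ (-C)^r (-M) X^r` by
`(-C)^N X' X^N`, whose norm is at most `‖X'‖ (‖C‖‖X‖)^N → 0`.
-/

open Finset Filter Topology

section FixedPointSeries

variable {R : Type*} [NormedRing R]

theorem norm_pow_mul_mul_pow_le (c m x : R) (r : ℕ) :
    ‖c ^ r * m * x ^ r‖ ≤ ‖m‖ * (‖c‖ * ‖x‖) ^ r := by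
  induction r with
  | zero => simp
  | succ r ih =>
    calc ‖c ^ (r + 1) * m * x ^ (r + 1)‖ = ‖c * (c ^ r * m * x ^ r) * x‖ := by
          rw [pow_succ' c, pow_succ x]; simp only [mul_assoc]
      _ ≤ ‖c‖ * ‖c ^ r * m * x ^ r‖ * ‖x‖ := norm_mul₃_le
      _ ≤ ‖c‖ * (‖m‖ * (‖c‖ * ‖x‖) ^ r) * ‖x‖ := by gcongr
      _ = ‖m‖ * (‖c‖ * ‖x‖) ^ (r + 1) := by ring

theorem summable_norm_pow_mul_mul_pow {c x : R} (m : R) (h : ‖c‖ * ‖x‖ < 1) :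
    Summable fun r : ℕ => ‖c ^ r * m * x ^ r‖ :=
  .of_nonneg_of_le (fun _ => norm_nonneg _) (norm_pow_mul_mul_pow_le c m x)
    ((summable_geometric_of_lt_one (by positivity) h).mul_left _)

theorem sub_sum_range_pow_mul_mul_pow {c m x y : R} (hy : y = m + c * y * x) (N : ℕ) :
    y - ∑ r ∈ range N, c ^ r * m * x ^ r = c ^ N * y * x ^ N := by
  induction N with
  | zero => simp
  | succ N ih =>
    calc y - ∑ r ∈ range (N + 1), c ^ r * m * x ^ r
        = c ^ N * y * x ^ N - c ^ N * m * x ^ N := by rw [sum_range_succ, ← ih]; abel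
      _ = c ^ N * (y - m) * x ^ N := by noncomm_ring
      _ = c ^ (N + 1) * y * x ^ (N + 1) := by
          rw [sub_eq_of_eq_add' hy, pow_succ c, pow_succ' x]; simp only [mul_assoc]

theorem hasSum_pow_mul_mul_pow_of_eq {c m x y : R} (h : ‖c‖ * ‖x‖ < 1)
    (hy : y = m + c * y * x) : HasSum (fun r : ℕ => c ^ r * m * x ^ r) y := by
  rw [hasSum_iff_tendsto_nat_of_summable_norm (summable_norm_pow_mul_mul_pow m h),
    tendsto_iff_norm_sub_tendsto_zero]
  refine squeeze_zero (fun _ => norm_nonneg _) (fun N => ?_)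
    (by simpa using (tendsto_pow_atTop_nhds_zero_of_lt_one (by positivity) h).const_mul ‖y‖)
  rw [norm_sub_rev, sub_sum_range_pow_mul_mul_pow hy]
  exact norm_pow_mul_mul_pow_le c y x N

end FixedPointSeries

theorem neg_pow_mul_neg_mul_pow {𝕜 R : Type*} [CommRing 𝕜] [Ring R] [Algebra 𝕜 R]
    (c m x : R) (r : ℕ) : (-c) ^ r * -m * x ^ r = (-1 : 𝕜) ^ (r + 1) • (c ^ r * m * x ^ r) := by
  rcases r.even_or_odd with hr | hr <;> simp [hr.neg_pow, pow_succ, mul_assoc]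

theorem linearized_eq_of_eventually_quadratic_eq_zero {R : Type*} [NormedRing R]
    [NormedAlgebra ℝ R] {p q r x : ℝ → R} {p' q' r' x' : R} {t₀ : ℝ} (hp : HasDerivAt p p' t₀)
    (hq : HasDerivAt q q' t₀) (hr : HasDerivAt r r' t₀) (hx : HasDerivAt x x' t₀)
    (heq : ∀ᶠ t in 𝓝 t₀, p t * x t ^ 2 + q t * x t + r t = 0) :
    p' * x t₀ ^ 2 + p t₀ * (x' * x t₀ + x t₀ * x') + (q' * x t₀ + q t₀ * x') + r' = 0 := by
  have hF := ((hp.mul (hx.mul hx)).add (hq.mul hx)).add hr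
  simp only [← sq] at hF
  exact hF.unique <| (hasDerivAt_const t₀ (0 : R)).congr_of_eventuallyEq heq

theorem Matrix.eq_neg_add_mul_mul_of_linear_eq {m K : Type*} [Fintype m] [DecidableEq m]
    [CommRing K] {Q P X Y F : Matrix m m K} (hQ : IsUnit Q) (hB : IsUnit (1 + Q⁻¹ * P * X))
    (h : Q * Y + P * X * Y + P * Y * X = -F) :
    Y = -((1 + Q⁻¹ * P * X)⁻¹ * Q⁻¹ * F) + -((1 + Q⁻¹ * P * X)⁻¹ * Q⁻¹ * P) * Y * X := by
  have hQY : (1 + Q⁻¹ * P * X) * Y = Q⁻¹ * (Q * Y + P * X * Y) := by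
    rw [mul_add, ← mul_assoc, nonsing_inv_mul _ ((isUnit_iff_isUnit_det Q).mp hQ), one_mul,
      add_mul, one_mul]
    simp only [mul_assoc]
  have hY : Y = (1 + Q⁻¹ * P * X)⁻¹ * (Q⁻¹ * (-F - P * Y * X)) := by
    rw [← eq_sub_of_add_eq h, ← hQY, ← mul_assoc,
      nonsing_inv_mul _ ((isUnit_iff_isUnit_det _).mp hB), one_mul]
  conv_lhs => rw [hY]
  noncomm_ring

section AlongCoordinate

variable {n d : ℕ} (A : Fin d → Matrix (Fin n) (Fin n) ℂ) (a : Fin d → ℂ) (s : Fin d) (t : ℝ)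

theorem Pmat_aT : Pmat A (aT a s t) = Pmat A a + t • A s := by
  simp [Pmat, aT, add_smul, Finset.sum_add_distrib, ite_smul, Complex.coe_smul]

theorem Amat_aT (b : Fin d → ℝ) : Amat A b (aT a s t) = Amat A b a - (2 * t) • A s := by
  have hcoef (j : Fin d) : ((b j : ℂ) - aT a s t j - starRingEnd ℂ (aT a s t j)) • A j =
      ((b j : ℂ) - a j - starRingEnd ℂ (a j)) • A j - if j = s then (2 * t) • A j else 0 := by
    split_ifs with h
    · simp only [aT, h, if_true, mul_one, map_add, Complex.conj_ofReal, sub_smul, add_smul,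
        Complex.coe_smul]
      module
    · simp [aT, h]
  simp [Amat, hcoef, Finset.sum_sub_distrib]

end AlongCoordinate

theorem derivative_of_small_solution_series_general {n d : ℕ} (s : Fin d)
    (A : Fin d → Matrix (Fin n) (Fin n) ℂ) (hHerm : ∀ j, (A j).IsHermitian)
    (b : Fin d → ℝ) (a : Fin d → ℂ)
    (X : ℝ → Matrix (Fin n) (Fin n) ℂ) (X' : Matrix (Fin n) (Fin n) ℂ)
    (hXeq : ∀ᶠ t : ℝ in nhds 0,
      Pmat A (aT a s t) * X t ^ 2 + Amat A b (aT a s t) * X t + (Pmat A (aT a s t))ᴴ = 0)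
    (hder : HasDerivAt X X' 0)
    (hAinv : IsUnit (Amat A b a))
    (hBinv : IsUnit (1 + (Amat A b a)⁻¹ * Pmat A a * X 0))
    (hsmall :
      ‖(1 + (Amat A b a)⁻¹ * Pmat A a * X 0)⁻¹ * (Amat A b a)⁻¹ * Pmat A a‖ * ‖X 0‖ < 1) :
    Summable (fun r : ℕ =>
      ‖(-1 : ℂ) ^ (r + 1) •
        (((1 + (Amat A b a)⁻¹ * Pmat A a * X 0)⁻¹ * (Amat A b a)⁻¹ * Pmat A a) ^ r *
          (1 + (Amat A b a)⁻¹ * Pmat A a * X 0)⁻¹ * (Amat A b a)⁻¹ * A s *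
          (1 - X 0) ^ 2 * (X 0) ^ r)‖) ∧
    HasSum
      (fun r : ℕ =>
        (-1 : ℂ) ^ (r + 1) •
          (((1 + (Amat A b a)⁻¹ * Pmat A a * X 0)⁻¹ * (Amat A b a)⁻¹ * Pmat A a) ^ r *
            (1 + (Amat A b a)⁻¹ * Pmat A a * X 0)⁻¹ * (Amat A b a)⁻¹ * A s *
            (1 - X 0) ^ 2 * (X 0) ^ r))
      X' := by
  set P := Pmat A a
  set Q := Amat A b a
  set B := (1 + Q⁻¹ * P * X 0)⁻¹
  have hp : HasDerivAt (fun t : ℝ => P + t • A s) (A s) 0 := by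
    simpa using ((hasDerivAt_id (0 : ℝ)).smul_const (A s)).const_add P
  have hq : HasDerivAt (fun t : ℝ => Q - (2 * t) • A s) (-(A s + A s)) 0 := by
    simpa [two_smul] using (((hasDerivAt_id (0 : ℝ)).const_mul 2).smul_const (A s)).const_sub Q
  have hr : HasDerivAt (fun t : ℝ => Pᴴ + t • A s) (A s) 0 := by
    simpa using ((hasDerivAt_id (0 : ℝ)).smul_const (A s)).const_add Pᴴ
  have hlin := linearized_eq_of_eventually_quadratic_eq_zero hp hq hr hder <|
    hXeq.mono fun t ht => by
      rwa [Pmat_aT, Amat_aT, conjTranspose_add, conjTranspose_smul, (hHerm s).eq,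
        star_trivial] at ht
  have hfix := Matrix.eq_neg_add_mul_mul_of_linear_eq (Y := X') (F := A s * (1 - X 0) ^ 2)
      hAinv hBinv <| by
    simp only [mul_zero, zero_smul, add_zero, sub_zero] at hlin
    rw [← sub_eq_zero, ← hlin]
    noncomm_ring
  have hterm (r : ℕ) : (-(B * Q⁻¹ * P)) ^ r * -(B * Q⁻¹ * (A s * (1 - X 0) ^ 2)) * X 0 ^ r =
      (-1 : ℂ) ^ (r + 1) • ((B * Q⁻¹ * P) ^ r * B * Q⁻¹ * A s * (1 - X 0) ^ 2 * X 0 ^ r) := by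
    rw [neg_pow_mul_neg_mul_pow (𝕜 := ℂ)]
    simp only [mul_assoc]
  rw [← norm_neg (B * Q⁻¹ * P)] at hsmall
  simp only [← hterm]
  exact ⟨summable_norm_pow_mul_mul_pow _ hsmall, hasSum_pow_mul_mul_pow_of_eq hsmall hfix⟩

/-- Lemma 2.1 of the paper: the derivative at `t = 0` of the small solution
`X(t)` of `P(t)X(t)² + A(t)X(t) + P(t)ᴴ = 0` along `a(t) = a + t e_s` is given by the
absolutely convergent series
`∑_r (−1)^{r+1} ((I + A⁻¹PX)⁻¹A⁻¹P)^r (I + A⁻¹PX)⁻¹ A⁻¹ A_s (I−X)² X^r`. -/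
theorem derivative_of_small_solution_series {n d : ℕ} (s : Fin d)
    (A : Fin d → Matrix (Fin n) (Fin n) ℂ) (hHerm : ∀ j, (A j).IsHermitian)
    (b : Fin d → ℝ) (a : Fin d → ℂ)
    (X : ℝ → Matrix (Fin n) (Fin n) ℂ) (X' : Matrix (Fin n) (Fin n) ℂ)
    (hXeq : ∀ᶠ t : ℝ in nhds 0,
      Pmat A (aT a s t) * X t ^ 2 + Amat A b (aT a s t) * X t + (Pmat A (aT a s t))ᴴ = 0)
    (hXnorm : ∀ᶠ t : ℝ in nhds 0, ‖X t‖ < 1)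
    (hder : HasDerivAt X X' 0)
    (hAinv : IsUnit (Amat A b a))
    (hBinv : IsUnit (1 + (Amat A b a)⁻¹ * Pmat A a * X 0))
    (hsmall :
      ‖(1 + (Amat A b a)⁻¹ * Pmat A a * X 0)⁻¹ * (Amat A b a)⁻¹ * Pmat A a‖ * ‖X 0‖ < 1) :
    Summable (fun r : ℕ =>
      ‖(-1 : ℂ) ^ (r + 1) •
        (((1 + (Amat A b a)⁻¹ * Pmat A a * X 0)⁻¹ * (Amat A b a)⁻¹ * Pmat A a) ^ r *
          (1 + (Amat A b a)⁻¹ * Pmat A a * X 0)⁻¹ * (Amat A b a)⁻¹ * A s *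
          (1 - X 0) ^ 2 * (X 0) ^ r)‖) ∧
    HasSum
      (fun r : ℕ =>
        (-1 : ℂ) ^ (r + 1) •
          (((1 + (Amat A b a)⁻¹ * Pmat A a * X 0)⁻¹ * (Amat A b a)⁻¹ * Pmat A a) ^ r *
            (1 + (Amat A b a)⁻¹ * Pmat A a * X 0)⁻¹ * (Amat A b a)⁻¹ * A s *
            (1 - X 0) ^ 2 * (X 0) ^ r))
      X' :=
  derivative_of_small_solution_series_general s A hHerm b a X X' hXeq hder hAinv hBinv hsmall
end
end

section
/- For every λ = (λ₁,…,λ₇) ∈ ℝ⁷, the 3×3 Hermitian matrix ∑_{j=1}^7 λ_j A_j is not positive definite. Consequently, the codimension-7 quadric M ⊂ ℂ^{10} defined by the matrices A₁,…,A₇ is not strongly pseudoconvex at 0. -/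
open Complex
open scoped ComplexOrder

noncomputable section

/-- The seven `3 × 3` Hermitian matrices defining the codimension-7 quadric `M ⊂ ℂ¹⁰`. -/
def quadricA : Fin 7 → Matrix (Fin 3) (Fin 3) ℂ
  | 0 => !![1, 0, 0; 0, 1, 0; 0, 0, -1]
  | 1 => !![1, 0, 0; 0, -1, 0; 0, 0, 0]
  | 2 => !![0, 0, 0; 0, 0, 1; 0, 1, 0]
  | 3 => !![0, 1, 0; 1, 0, 0; 0, 0, 0]
  | 4 => !![0, 0, I; 0, 0, 0; -I, 0, 0]
  | 5 => !![0, 0, 0; 0, 0, I; 0, -I, 0]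
  | 6 => !![0, I, 0; -I, 0, 0; 0, 0, 0]

/-!
Pairing with the positive definite matrix `diag(1, 1, 2)` is a linear functional
`M ↦ M₁₁ + M₂₂ + 2 M₃₃` that vanishes on every `A_j` (their diagonals are `(1, 1, -1)`,
`(1, -1, 0)` and zero), but is positive on every positive definite matrix, whose diagonal
entries are positive. Hence no linear combination of the `A_j` is positive definite.
-/

namespace Matrix

variable {n ι R : Type*} [Fintype n] [Fintype ι] [CommRing R] [PartialOrder R]
  [IsStrictOrderedRing R] [StarRing R]

theorem PosDef.sum_mul_diag_pos [Nonempty n] {M : Matrix n n R} (hM : M.PosDef) {w : n → R}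
    (hw : ∀ i, 0 < w i) : 0 < ∑ i, w i * M i i :=
  Finset.sum_pos (fun i _ ↦ mul_pos (hw i) hM.diag_pos) Finset.univ_nonempty

theorem not_posDef_sum_smul_of_sum_mul_diag_eq_zero [Nonempty n] {A : ι → Matrix n n R}
    {w : n → R} (hw : ∀ i, 0 < w i) (hA : ∀ j, ∑ i, w i * A j i i = 0) (c : ι → R) :
    ¬ (∑ j, c j • A j).PosDef := by
  intro hpos
  have hzero : ∑ i, w i * (∑ j, c j • A j) i i = 0 := by
    simp only [sum_apply, smul_apply, smul_eq_mul, Finset.mul_sum]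
    rw [Finset.sum_comm]
    refine Finset.sum_eq_zero fun j _ ↦ ?_
    simp_rw [mul_left_comm (w _) (c j), ← Finset.mul_sum, hA j, mul_zero]
  exact (hpos.sum_mul_diag_pos hw).ne' hzero

end Matrix

theorem quadricA_sum_mul_diag_eq_zero (j : Fin 7) :
    ∑ i, ![1, 1, 2] i * quadricA j i i = 0 := by
  fin_cases j <;> simp [quadricA, Fin.sum_univ_three, one_add_one_eq_two]

/-- no real linear combination of the matrices `A₁, …, A₇` is positive
definite; hence the codimension-7 quadric `M ⊂ ℂ¹⁰` is not strongly pseudoconvex at `0`. -/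
theorem quadric_not_strongly_pseudoconvex :
    ∀ lam : Fin 7 → ℝ, ¬ (∑ j, (lam j : ℂ) • quadricA j).PosDef := fun lam ↦
  Matrix.not_posDef_sum_smul_of_sum_mul_diag_eq_zero (w := ![1, 1, 2])
    (by intro i; fin_cases i <;> norm_num) quadricA_sum_mul_diag_eq_zero _
end
end

section
/- There exists ε₀ ∈ (0,1/4) such that for every ε ∈ (0,ε₀) the following holds. Let α ∈ (−1,1) be the root of 2εα² + α + 2ε = 0 of absolute value < 1, γ ∈ (−1,1) the root of εγ² + γ + ε = 0 of absolute value < 1, X := diag(α,0,γ), and V := (1,1,1) ∈ ℂ³. Then the 7×7 real matrix whose (j,s)-entry is Re( ∑_{r=0}^∞ (conj-transpose V) · (conj-transpose X)^r · A_j · A₁⁻¹ · A_s · X^r · V ) is invertible (each series converging absolutely). In other words, the codimension-7 quadric M ⊂ ℂ^{10} is 𝔇(a)-nondegenerate at 0 for a = (ε,ε,0,…,0), even though it is neither strongly pseudoconvex nor 𝔇-nondegenerate at 0. -/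
/-!
Since `X = diag(α, 0, γ)` is diagonal, every series is a finite sum of geometric series and equals
`∑_{p,q} (A_j A₁⁻¹ A_s)_{pq} / (1 - x_p x_q)`. The resulting real `7 × 7` matrix depends only on
`a = α²/(1-α²) ≈ 4ε²`, `b = αγ/(1-αγ) ≈ 2ε²` and `c = γ²/(1-γ²) ≈ ε²`; it is block diagonal, and
its two block determinants are `12 b - 18 a + O(ε⁴) < 0` and `2 b - 2 c + O(ε⁴) > 0`. At `ε = 0`
both vanish, which is why the quadric fails to be `𝔇`-nondegenerate.
-/

open Matrix Complex
open scoped Matrix.Norms.L2Operator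

noncomputable section

section DiagonalSeries

variable {𝕜 ι : Type*} [RCLike 𝕜] [Fintype ι] [DecidableEq ι]

theorem norm_star_mul_lt_one {a b : 𝕜} (ha : ‖a‖ < 1) (hb : ‖b‖ < 1) : ‖star a * b‖ < 1 := by
  rw [norm_mul, norm_star]
  exact mul_lt_one_of_nonneg_of_lt_one_left (norm_nonneg _) ha hb.le

theorem dotProduct_conjTranspose_diagonal_pow_mulVec (d : ι → 𝕜) (M : Matrix ι ι 𝕜)
    (v : ι → 𝕜) (r : ℕ) :
    star v ⬝ᵥ (((diagonal d)ᴴ ^ r * M * diagonal d ^ r) *ᵥ v) =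
      ∑ p, ∑ q, star (v p) * M p q * v q * (star (d p) * d q) ^ r := by
  simp only [diagonal_conjTranspose, diagonal_pow, dotProduct, mulVec, diagonal_mul,
    mul_diagonal, Pi.pow_apply, Pi.star_apply, Finset.mul_sum, mul_pow]
  refine Finset.sum_congr rfl fun p _ => Finset.sum_congr rfl fun q _ => ?_
  ring

theorem hasSum_dotProduct_conjTranspose_diagonal_pow_mulVec {d : ι → 𝕜}
    (hd : ∀ p, ‖d p‖ < 1) (M : Matrix ι ι 𝕜) (v : ι → 𝕜) :
    HasSum (fun r => star v ⬝ᵥ (((diagonal d)ᴴ ^ r * M * diagonal d ^ r) *ᵥ v))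
      (∑ p, ∑ q, star (v p) * M p q * v q * (1 - star (d p) * d q)⁻¹) := by
  simp only [dotProduct_conjTranspose_diagonal_pow_mulVec]
  exact hasSum_sum fun p _ => hasSum_sum fun q _ =>
    (hasSum_geometric_of_norm_lt_one (norm_star_mul_lt_one (hd p) (hd q))).mul_left _

theorem summable_norm_dotProduct_conjTranspose_diagonal_pow_mulVec {d : ι → 𝕜}
    (hd : ∀ p, ‖d p‖ < 1) (M : Matrix ι ι 𝕜) (v : ι → 𝕜) :
    Summable (fun r => ‖star v ⬝ᵥ (((diagonal d)ᴴ ^ r * M * diagonal d ^ r) *ᵥ v)‖) := by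
  simp only [dotProduct_conjTranspose_diagonal_pow_mulVec]
  refine Summable.of_nonneg_of_le (fun r => norm_nonneg _) (fun r => norm_sum_le_of_le _
    fun p _ => norm_sum_le_of_le _ fun q _ => (norm_mul_le _ _).trans_eq (by rw [norm_pow]))
    (summable_sum fun p _ => summable_sum fun q _ => ?_)
  exact (summable_geometric_of_lt_one (norm_nonneg _)
    (norm_star_mul_lt_one (hd p) (hd q))).mul_left _

end DiagonalSeries

theorem quadricA_zero_inv : (quadricA 0)⁻¹ = quadricA 0 := by
  refine inv_eq_left_inv ?_
  ext i j
  fin_cases i <;> fin_cases j <;> simp [quadricA, mul_apply, Fin.sum_univ_three, one_apply]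

/-- The weights `(1 - x_p x_q)⁻¹` for `x = (α, 0, γ)`, written through `a = α²/(1-α²)`,
`b = αγ/(1-αγ)` and `c = γ²/(1-γ²)`. -/
def quadricWeight (a b c : ℝ) : Matrix (Fin 3) (Fin 3) ℝ :=
  !![1 + a, 1, 1 + b; 1, 1, 1; 1 + b, 1, 1 + c]

def quadricGram (a b c : ℝ) : Matrix (Fin 7) (Fin 7) ℝ :=
  !![1 + a - c, a, 2, 2, 0, 0, 0;
     a, 2 + a, -1, 0, 0, 0, 0;
     2, -1, c, 1 + b, 0, 0, 0;
     2, 0, 1 + b, 2 + a, 0, 0, 0;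
     0, 0, 0, 0, c - a, -1, 1;
     0, 0, 0, 0, -1, c, -1 - b;
     0, 0, 0, 0, 1, -1 - b, 2 + a]

theorem inv_one_sub_star_mul_eq_quadricWeight {α γ : ℝ} (hα : 1 - α * α ≠ 0)
    (hαγ : 1 - α * γ ≠ 0) (hγ : 1 - γ * γ ≠ 0) (p q : Fin 3) :
    (1 - star (![(α : ℂ), 0, (γ : ℂ)] p) * ![(α : ℂ), 0, (γ : ℂ)] q)⁻¹ =
      (quadricWeight (α * α / (1 - α * α)) (α * γ / (1 - α * γ)) (γ * γ / (1 - γ * γ)) p q : ℂ) := by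
  have hγα : 1 - γ * α ≠ 0 := by rwa [mul_comm]
  have hα2 : 1 - α ^ 2 ≠ 0 := by rwa [sq]
  have hγ2 : 1 - γ ^ 2 ≠ 0 := by rwa [sq]
  fin_cases p <;> fin_cases q <;> simp [quadricWeight] <;> norm_cast <;> field_simp <;> ring

theorem re_sum_quadricA_mul_quadricWeight (a b c : ℝ) (j s : Fin 7) :
    (∑ p, ∑ q, star ((![1, 1, 1] : Fin 3 → ℂ) p) * (quadricA j * quadricA 0 * quadricA s) p q *
      (![1, 1, 1] : Fin 3 → ℂ) q * (quadricWeight a b c p q : ℂ)).re = quadricGram a b c j s := by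
  fin_cases j <;> fin_cases s <;>
    simp [quadricA, quadricWeight, quadricGram, mul_apply, Fin.sum_univ_three] <;> ring

theorem det_quadricGram (a b c : ℝ) :
    (quadricGram a b c).det =
      (12 * b - 18 * a - 4 * c ^ 2 + 4 * b * c - 2 * b ^ 2 + 6 * a * c + 6 * a * b - 9 * a ^ 2
        + 2 * b ^ 2 * c - 4 * a * c ^ 2 + 2 * a * b * c - 3 * a * b ^ 2 + 3 * a ^ 2 * c
        + a * b ^ 2 * c - a ^ 2 * c ^ 2) *
      (2 * b - 2 * c - 2 * b * c + 2 * c ^ 2 - 2 * a * c + 2 * a * b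
        + a * c ^ 2 - b ^ 2 * c + a * b ^ 2 - a ^ 2 * c) := by
  have hblock : quadricGram a b c = reindex finSumFinEquiv finSumFinEquiv (fromBlocks
      !![1 + a - c, a, 2, 2; a, 2 + a, -1, 0; 2, -1, c, 1 + b; 2, 0, 1 + b, 2 + a] 0 0
      !![c - a, -1, 1; -1, c, -1 - b; 1, -1 - b, 2 + a]) := by
    ext i j
    fin_cases i <;> fin_cases j <;> rfl
  rw [hblock, det_reindex_self, det_fromBlocks_zero₂₁, det_fin_three, det_succ_row_zero]
  simp [Fin.sum_univ_succ, det_fin_three, Fin.succAbove]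
  ring

theorem det_quadricGram_neg {e a b c : ℝ} (he : 0 < e) (he' : e ≤ 1 / 10000)
    (ha : 4 * e ≤ a) (ha' : a ≤ 5 * e) (hb : 2 * e ≤ b) (hb' : b ≤ 5 * e)
    (hc : e ≤ c) (hc' : c ≤ 6 / 5 * e) :
    (quadricGram a b c).det < 0 := by
  have ha0 : 0 ≤ a := by linarith
  have hb0 : 0 ≤ b := by linarith
  have hc0 : 0 ≤ c := by linarith
  have hb1 : b ≤ 1 := by linarith
  have hhigher : 4 * b * c + 6 * a * c + 6 * a * b + 2 * b ^ 2 * c + 2 * a * b * c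
      + 3 * a ^ 2 * c + a * b ^ 2 * c ≤ e := by
    have hab : a * b ≤ 5 * e * (5 * e) := mul_le_mul ha' hb' hb0 (by positivity)
    have hac : a * c ≤ 5 * e * (5 * e) := mul_le_mul ha' (by linarith) hc0 (by positivity)
    have hbc : b * c ≤ 5 * e * (5 * e) := mul_le_mul hb' (by linarith) hc0 (by positivity)
    have ha1 : a ≤ 1 := by linarith
    nlinarith [mul_le_mul_of_nonneg_left hb1 (mul_nonneg hb0 hc0),
      mul_le_mul_of_nonneg_left hb1 (mul_nonneg ha0 hc0),
      mul_le_mul_of_nonneg_left ha1 (mul_nonneg ha0 hc0),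
      mul_le_mul_of_nonneg_left (mul_le_one₀ ha1 hb0 hb1) (mul_nonneg hb0 hc0)]
  rw [det_quadricGram]
  refine mul_neg_of_neg_of_pos ?_ ?_
  · nlinarith [sq_nonneg (a * c), mul_nonneg ha0 (sq_nonneg b), mul_nonneg ha0 (sq_nonneg c)]
  · nlinarith [mul_nonneg (sub_nonneg.2 ha) (sub_nonneg.2 hb),
      mul_nonneg (sub_nonneg.2 ha) (sub_nonneg.2 hc), mul_nonneg (sub_nonneg.2 hb) (sub_nonneg.2 hc)]

/-- The small root of `t x² + x + t = 0` is `x = -t (1 + x²) ≈ -t`. -/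
theorem neg_mem_Icc_of_quadratic_root {t x : ℝ} (ht : 0 < t) (ht' : t ≤ 1 / 50) (hx : |x| < 1)
    (hroot : t * x ^ 2 + x + t = 0) : t ≤ -x ∧ -x ≤ 101 / 100 * t := by
  have hx' : -x = t * (1 + x ^ 2) := by linarith
  have hpos : 0 < -x := by rw [hx']; positivity
  have hlt : -x < 2 * t := by nlinarith [abs_lt.mp hx]
  have hsmall : x ^ 2 ≤ 1 / 100 := by nlinarith
  constructor <;> nlinarith [sq_nonneg x]

theorem mul_div_one_sub_mul_mem_Icc {s t x y : ℝ} (hs : 0 < s) (hs' : s ≤ 1 / 50)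
    (ht : 0 < t) (ht' : t ≤ 1 / 50) (hx : s ≤ -x) (hx' : -x ≤ 101 / 100 * s)
    (hy : t ≤ -y) (hy' : -y ≤ 101 / 100 * t) :
    s * t ≤ x * y / (1 - x * y) ∧ x * y / (1 - x * y) ≤ 11 / 10 * (s * t) := by
  have hlow : s * t ≤ x * y := by nlinarith [mul_le_mul hx hy ht.le (hs.le.trans hx)]
  have hup : x * y ≤ 10201 / 10000 * (s * t) := by
    nlinarith [mul_le_mul hx' hy' (ht.le.trans hy) (by positivity : (0 : ℝ) ≤ 101 / 100 * s)]
  have hst : s * t ≤ 1 / 2500 := by nlinarith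
  have hden : 0 < 1 - x * y := by nlinarith
  rw [le_div_iff₀ hden, div_le_iff₀ hden]
  constructor <;> nlinarith [mul_pos hs ht]

theorem det_quadricGram_neg_of_roots {ε α γ : ℝ} (hε : 0 < ε) (hε₀ : ε < 1 / 100)
    (hα : |α| < 1) (hαroot : 2 * ε * α ^ 2 + α + 2 * ε = 0)
    (hγ : |γ| < 1) (hγroot : ε * γ ^ 2 + γ + ε = 0) :
    (quadricGram (α * α / (1 - α * α)) (α * γ / (1 - α * γ)) (γ * γ / (1 - γ * γ))).det < 0 := by
  obtain ⟨hαl, hαu⟩ := neg_mem_Icc_of_quadratic_root (t := 2 * ε) (by positivity) (by linarith) hα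
    (by linear_combination hαroot)
  obtain ⟨hγl, hγu⟩ := neg_mem_Icc_of_quadratic_root hε (by linarith) hγ hγroot
  obtain ⟨haa, haa'⟩ := mul_div_one_sub_mul_mem_Icc (by positivity) (by linarith) (by positivity)
    (by linarith) hαl hαu hαl hαu
  obtain ⟨hag, hag'⟩ := mul_div_one_sub_mul_mem_Icc (by positivity) (by linarith) hε
    (by linarith) hαl hαu hγl hγu
  obtain ⟨hgg, hgg'⟩ := mul_div_one_sub_mul_mem_Icc hε (by linarith) hε
    (by linarith) hγl hγu hγl hγu
  exact det_quadricGram_neg (e := ε ^ 2) (by positivity) (by nlinarith) (by linarith)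
    (by nlinarith) (by linarith) (by nlinarith) (by linarith) (by nlinarith)

theorem one_sub_mul_ne_zero {x y : ℝ} (hx : |x| < 1) (hy : |y| < 1) : 1 - x * y ≠ 0 := by
  have hxy : |x * y| < 1 := by
    rw [abs_mul]
    exact mul_lt_one_of_nonneg_of_lt_one_left (abs_nonneg x) hx hy.le
  linarith [le_abs_self (x * y)]

/-- for all small enough `ε > 0`, with `α, γ` the small roots of
`2εα² + α + 2ε = 0` and `εγ² + γ + ε = 0`, `X = diag(α,0,γ)` and `V = (1,1,1)`, the `7 × 7`
real matrix `( Re ∑_r Vᴴ (Xᴴ)^r A_j A₁⁻¹ A_s X^r V )_{j,s}` is invertible (each series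
converging absolutely): the quadric `M ⊂ ℂ¹⁰` is `𝔇(a)`-nondegenerate at `0` for
`a = (ε,ε,0,…,0)`. -/
theorem quadric_Da_nondegenerate :
    ∃ ε₀ : ℝ, 0 < ε₀ ∧ ε₀ < 1 / 4 ∧ ∀ ε : ℝ, 0 < ε → ε < ε₀ →
      ∀ α γ : ℝ, |α| < 1 → 2 * ε * α ^ 2 + α + 2 * ε = 0 →
        |γ| < 1 → ε * γ ^ 2 + γ + ε = 0 →
      (∀ j s : Fin 7, Summable (fun r : ℕ =>
        ‖star (![1, 1, 1] : Fin 3 → ℂ) ⬝ᵥ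
          ((((Matrix.diagonal ![(α : ℂ), 0, (γ : ℂ)])ᴴ) ^ r * quadricA j *
              (quadricA 0)⁻¹ * quadricA s *
              (Matrix.diagonal ![(α : ℂ), 0, (γ : ℂ)]) ^ r).mulVec
            (![1, 1, 1] : Fin 3 → ℂ))‖)) ∧
      IsUnit (Matrix.of fun j s : Fin 7 =>
        (∑' r : ℕ,
          star (![1, 1, 1] : Fin 3 → ℂ) ⬝ᵥ
            ((((Matrix.diagonal ![(α : ℂ), 0, (γ : ℂ)])ᴴ) ^ r * quadricA j *
                (quadricA 0)⁻¹ * quadricA s *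
                (Matrix.diagonal ![(α : ℂ), 0, (γ : ℂ)]) ^ r).mulVec
              (![1, 1, 1] : Fin 3 → ℂ))).re) := by
  refine ⟨1 / 100, by norm_num, by norm_num, fun ε hε hε₀ α γ hα hαroot hγ hγroot => ?_⟩
  have hd : ∀ p, ‖![(α : ℂ), 0, (γ : ℂ)] p‖ < 1 := by
    intro p; fin_cases p <;> simp [hα, hγ]
  have hassoc : ∀ (X B C D : Matrix (Fin 3) (Fin 3) ℂ) (r : ℕ),
      Xᴴ ^ r * B * C * D * X ^ r = Xᴴ ^ r * (B * C * D) * X ^ r := by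
    intros; simp only [Matrix.mul_assoc]
  refine ⟨fun j s => by
    simpa only [hassoc] using summable_norm_dotProduct_conjTranspose_diagonal_pow_mulVec hd _ _, ?_⟩
  rw [isUnit_iff_isUnit_det, isUnit_iff_ne_zero]
  convert (det_quadricGram_neg_of_roots hε hε₀ hα hαroot hγ hγroot).ne using 2
  ext j s
  rw [of_apply, tsum_congr fun r => by rw [hassoc],
    (hasSum_dotProduct_conjTranspose_diagonal_pow_mulVec hd _ _).tsum_eq]
  simp only [inv_one_sub_star_mul_eq_quadricWeight (one_sub_mul_ne_zero hα hα)
    (one_sub_mul_ne_zero hα hγ) (one_sub_mul_ne_zero hγ hγ), quadricA_zero_inv,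
    re_sum_quadricA_mul_quadricWeight]
end
end
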